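/- arXiv:1304.6133 — 5 statements merged into one kernel-verified Lean document; each statement's English description precedes it below -/
import Mathlib

section
/- For X ∼ Bernoulli(1/2) passed through the asymmetric erasure channel with P(Y=0|X=0)=2/3, P(Y=E|X=0)=1/3, P(Y=E|X=1)=1/2, P(Y=1|X=1)=1/2, one has s*(X;Y) = (1/2)·log₂(12/5), which is strictly greater than ρ_m(X;Y)² = 3/5. -/
open scoped BigOperators

noncomputable section

/-- `p` is a probability mass function on a finite type. -/
def IsPMF {X : Type*} [Fintype X] (p : X → ℝ) : Prop :=
  (∀ x, 0 ≤ p x) ∧ ∑ x, p x = 1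

/-- `p` is a joint probability mass function. -/
def IsJointPMF {X Y : Type*} [Fintype X] [Fintype Y] (p : X → Y → ℝ) : Prop :=
  (∀ x y, 0 ≤ p x y) ∧ ∑ x, ∑ y, p x y = 1

/-- Hirschfeld–Gebelein–Rényi maximal correlation of a joint pmf `p`. -/
def maxCorr {X Y : Type*} [Fintype X] [Fintype Y] (p : X → Y → ℝ) : ℝ :=
  sSup {c : ℝ | ∃ f : X → ℝ, ∃ g : Y → ℝ,
    (∑ x, ∑ y, p x y * f x) = 0 ∧ (∑ x, ∑ y, p x y * g y) = 0 ∧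
    (∑ x, ∑ y, p x y * (f x)^2) = 1 ∧ (∑ x, ∑ y, p x y * (g y)^2) = 1 ∧
    c = ∑ x, ∑ y, p x y * f x * g y}

/-- Relative entropy (KL divergence) between pmfs on a finite type. -/
def KL {X : Type*} [Fintype X] (r p : X → ℝ) : ℝ :=
  ∑ x, r x * Real.log (r x / p x)

/-- `s*(X;Y)` for input distribution `p` and channel `W`. -/
def sStar {X Y : Type*} [Fintype X] [Fintype Y] (p : X → ℝ) (W : X → Y → ℝ) : ℝ :=
  sSup {c : ℝ | ∃ r : X → ℝ, IsPMF r ∧ r ≠ p ∧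
    c = KL (fun y => ∑ x, r x * W x y) (fun y => ∑ x, p x * W x y) / KL r p}

/-- Shannon entropy of a pmf on a finite type. -/
def entropy {X : Type*} [Fintype X] (p : X → ℝ) : ℝ :=
  ∑ x, Real.negMulLog (p x)

/-- Mutual information of a joint pmf. -/
def mutInfo {X Y : Type*} [Fintype X] [Fintype Y] (p : X → Y → ℝ) : ℝ :=
  entropy (fun x => ∑ y, p x y) + entropy (fun y => ∑ x, p x y)
    - entropy (fun z : X × Y => p z.1 z.2)

end

/-- `X ∼ Bernoulli(1/2)`. -/
noncomputable def pX : Fin 2 → ℝ := fun _ => 1/2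

/-- The asymmetric erasure channel: `Y ∈ {0, E, 1}` encoded as `Fin 3` with `E = 1`. -/
noncomputable def Wch : Fin 2 → Fin 3 → ℝ := ![![2/3, 1/3, 0], ![0, 1/2, 1/2]]

/-- Joint pmf of `(X,Y)`. -/
noncomputable def pXY : Fin 2 → Fin 3 → ℝ := fun x y => pX x * Wch x y

/-- `P(U = u | X = x)` (row `x`): `U|X=0 ∼ Ber(0.1)`, `U|X=1 ∼ Ber(0.4)`. -/
noncomputable def condU : Fin 2 → Fin 2 → ℝ := ![![9/10, 1/10], ![3/5, 2/5]]

/-- Joint pmf of `(U,X)` (so that `U - X - Y` is a Markov chain). -/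
noncomputable def qUX : Fin 2 → Fin 2 → ℝ := fun u x => pX x * condU x u

/-- Joint pmf of `(U,Y)` induced through the channel. -/
noncomputable def qUY : Fin 2 → Fin 3 → ℝ := fun u y => ∑ x, qUX u x * Wch x y

/-!
Write `r = (a, 1 - a)` and `s = ½ log₂(12/5)`. With `klFun t = t log t + 1 - t`, both divergences
are `f`-divergences, so `gap a = D(r_Y ‖ p_Y) - s · D(r ‖ p)` is an explicit function of `a`. It
vanishes at `a = 0` and at `a = 1/2`, where its derivative vanishes too. Its second derivative is
strictly decreasing on `(0, 1)` and changes sign at some `m ∈ (1/4, 1/2)`, so `gap` is convex on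
`[0, m]` and concave on `[m, 1]`: on `[m, 1]` it lies below its horizontal tangent at `1/2`, and on
`[0, m]` below the larger of its endpoint values. Hence `gap ≤ 0`, i.e. the ratio is at most `s`,
with equality at `r = (0, 1)`.

For the maximal correlation, the normalisation forces `f = ±(1, -1)`, and then Cauchy–Schwarz in
`L²(P_Y)` gives `ρ_m = √(3/5)`.
-/

open Real Set InformationTheory

lemma KL_eq_sum_mul_klFun {X : Type*} [Fintype X] {r p : X → ℝ} (hp : ∀ x, p x ≠ 0)
    (hsum : ∑ x, r x = ∑ x, p x) : KL r p = ∑ x, p x * klFun (r x / p x) := by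
  have hterm : ∀ x, p x * klFun (r x / p x) = r x * log (r x / p x) + (p x - r x) := by
    intro x
    rw [klFun_apply]
    field_simp [hp x]
    ring
  simp only [hterm, Finset.sum_add_distrib, Finset.sum_sub_distrib, hsum, sub_self, add_zero, KL]

lemma KL_pos {X : Type*} [Fintype X] {r p : X → ℝ} (hr : ∀ x, 0 ≤ r x) (hp : ∀ x, 0 < p x)
    (hsum : ∑ x, r x = ∑ x, p x) (hne : r ≠ p) : 0 < KL r p := by
  obtain ⟨x, hx⟩ := Function.ne_iff.mp hne
  have hratio : ∀ y, 0 ≤ r y / p y := fun y => div_nonneg (hr y) (hp y).le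
  rw [KL_eq_sum_mul_klFun (fun y => (hp y).ne') hsum]
  refine Finset.sum_pos' (fun y _ => mul_nonneg (hp y).le (klFun_nonneg (hratio y)))
    ⟨x, Finset.mem_univ x, mul_pos (hp x) ((klFun_nonneg (hratio x)).lt_of_ne' ?_)⟩
  rwa [Ne, klFun_eq_zero_iff (hratio x), div_eq_one_iff_eq (hp x).ne']

lemma ConcaveOn.isMaxOn_of_hasDerivAt_eq_zero {S : Set ℝ} {f : ℝ → ℝ} {x : ℝ}
    (hf : ConcaveOn ℝ S f) (hx : x ∈ interior S) (hd : HasDerivAt f 0 x) : IsMaxOn f S x := by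
  have hmin := (neg_convexOn_iff.mpr hf).isMinOn_of_rightDeriv_eq_zero hx
    (hd.neg.hasDerivWithinAt.derivWithin (uniqueDiffWithinAt_Ioi x) |>.trans neg_zero)
  exact fun y hy => show f y ≤ f x from neg_le_neg_iff.mp (hmin hy)

lemma isMaxOn_Icc_of_convexOn_of_concaveOn {f : ℝ → ℝ} {a m c b : ℝ}
    (hconv : ConvexOn ℝ (Icc a m) f) (hconc : ConcaveOn ℝ (Icc m b) f) (hc : c ∈ Ioo m b)
    (hd : HasDerivAt f 0 c) (ha : f a ≤ f c) : IsMaxOn f (Icc a b) c := by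
  have hright : IsMaxOn f (Icc m b) c :=
    hconc.isMaxOn_of_hasDerivAt_eq_zero (by rwa [interior_Icc]) hd
  intro x ⟨hax, hxb⟩
  rcases le_total x m with hxm | hmx
  · have hm : f m ≤ f c := hright ⟨le_rfl, hc.1.le.trans hc.2.le⟩
    calc f x ≤ max (f a) (f m) :=
          hconv.le_max_of_mem_Icc ⟨le_rfl, hax.trans hxm⟩ ⟨hax.trans hxm, le_rfl⟩ ⟨hax, hxm⟩
      _ ≤ f c := max_le ha hm
  · exact hright ⟨hmx, hxb⟩

namespace ErasureChannel

noncomputable def sStarVal : ℝ := 1/2 * (log (12/5) / log 2)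

lemma three_fifths_lt_sStarVal : 3/5 < sStarVal := by
  have h : log ((2:ℝ)^6) < log ((12/5:ℝ)^5) := log_lt_log (by positivity) (by norm_num)
  rw [log_pow, log_pow] at h
  rw [sStarVal, ← mul_div_assoc, lt_div_iff₀ (log_pos one_lt_two)]
  push_cast at h
  linarith

-- Equivalent to `0 < gap'' (1/4)`.
lemma sStarVal_lt_seven_elevenths : sStarVal < 7/11 := by
  have h : log ((12/5:ℝ)^11) < log ((2:ℝ)^14) := log_lt_log (by positivity) (by norm_num)
  rw [log_pow, log_pow] at h
  rw [sStarVal, ← mul_div_assoc, div_lt_iff₀ (log_pos one_lt_two)]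
  push_cast at h
  linarith

noncomputable def gap (a : ℝ) : ℝ :=
  (1/3 - sStarVal/2) * klFun (2*a) + (1/4 - sStarVal/2) * klFun (2 - 2*a)
    + 5/12 * klFun ((6 - 2*a)/5)

noncomputable def gap' (a : ℝ) : ℝ :=
  (2/3 - sStarVal) * log (2*a) - (1/2 - sStarVal) * log (2 - 2*a) - 1/6 * log ((6 - 2*a)/5)

noncomputable def gap'' (a : ℝ) : ℝ :=
  (2/3 - sStarVal)/a + (1/2 - sStarVal)/(1 - a) + 1/3 / (6 - 2*a)

lemma continuous_gap : Continuous gap := by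
  unfold gap
  fun_prop

lemma gap_zero : gap 0 = 0 := by
  have hlog : log (12/5 : ℝ) = log 2 + log (6/5) := by
    rw [← log_mul (by norm_num) (by norm_num)]
    norm_num
  simp only [gap, sStarVal, klFun_apply, hlog]
  norm_num
  field_simp
  ring

lemma gap_half : gap (1/2) = 0 := by
  norm_num [gap, klFun_one]

lemma gap'_half : gap' (1/2) = 0 := by
  norm_num [gap']

lemma hasDerivAt_gap {a : ℝ} (ha : 0 < a) (ha1 : a < 1) : HasDerivAt gap (gap' a) a := by
  have h1 := (hasDerivAt_klFun (x := 2*a) (by positivity)).comp a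
    ((hasDerivAt_id' a).const_mul 2)
  have h2 := (hasDerivAt_klFun (x := 2 - 2*a) (by linarith)).comp a
    (((hasDerivAt_id' a).const_mul 2).const_sub 2)
  have h3 := (hasDerivAt_klFun (x := (6 - 2*a)/5) (by linarith)).comp a
    ((((hasDerivAt_id' a).const_mul 2).const_sub 6).div_const 5)
  refine HasDerivAt.congr_deriv (((h1.const_mul (1/3 - sStarVal/2)).add
    (h2.const_mul (1/4 - sStarVal/2))).add (h3.const_mul (5/12))) ?_
  rw [gap']
  ring

lemma hasDerivAt_gap' {a : ℝ} (ha : 0 < a) (ha1 : a < 1) : HasDerivAt gap' (gap'' a) a := by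
  have h4 : 1 - a ≠ 0 := by linarith
  have h5 : 2 - 2*a ≠ 0 := by linarith
  have h6 : 6 - 2*a ≠ 0 := by linarith
  have h1 := ((hasDerivAt_id' a).const_mul 2).log (by positivity)
  have h2 := (((hasDerivAt_id' a).const_mul 2).const_sub 2).log h5
  have h3 := ((((hasDerivAt_id' a).const_mul 2).const_sub 6).div_const 5).log (by positivity)
  refine HasDerivAt.congr_deriv (((h1.const_mul (2/3 - sStarVal)).sub
    (h2.const_mul (1/2 - sStarVal))).sub (h3.const_mul (1/6))) ?_
  rw [gap'']
  field_simp
  ring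

lemma gap''_strictAntiOn : StrictAntiOn gap'' (Ioo 0 1) := by
  intro a ⟨ha0, ha1⟩ b ⟨hb0, hb1⟩ hab
  have hC := three_fifths_lt_sStarVal
  have hC' := sStarVal_lt_seven_elevenths
  have hba : 0 ≤ b - a := by linarith
  have hfirst : (2/3 - sStarVal)/b < (2/3 - sStarVal)/a :=
    div_lt_div_of_pos_left (by linarith) ha0 hab
  have hsecond : b - a ≤ 1/(1 - b) - 1/(1 - a) := by
    have h : (1 - b) * (1 - a) ≤ 1 := by nlinarith
    rw [div_sub_div _ _ (by linarith) (by linarith), le_div_iff₀ (by nlinarith)]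
    nlinarith [mul_le_mul_of_nonneg_left h hba]
  have hthird : 1/(6 - 2*b) - 1/(6 - 2*a) ≤ (b - a)/8 := by
    have h : 16 ≤ (6 - 2*b) * (6 - 2*a) := by nlinarith
    rw [div_sub_div _ _ (by linarith) (by linarith), div_le_div_iff₀ (by nlinarith) (by norm_num)]
    nlinarith [mul_le_mul_of_nonneg_left h hba]
  have hsecond' := mul_le_mul_of_nonneg_left hsecond (by linarith : 0 ≤ sStarVal - 1/2)
  have hmargin := mul_le_mul_of_nonneg_right (by linarith : 1/24 ≤ sStarVal - 1/2) hba
  have hsplit : gap'' a - gap'' b = ((2/3 - sStarVal)/a - (2/3 - sStarVal)/b)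
      + (sStarVal - 1/2) * (1/(1 - b) - 1/(1 - a)) - 1/3 * (1/(6 - 2*b) - 1/(6 - 2*a)) := by
    rw [gap'', gap'']
    ring
  linarith

lemma exists_gap''_eq_zero : ∃ m ∈ Ioo (1/4 : ℝ) (1/2), gap'' m = 0 := by
  have hC := three_fifths_lt_sStarVal
  have hC' := sStarVal_lt_seven_elevenths
  have hcont : ContinuousOn gap'' (Icc (1/4) (1/2)) := by
    unfold gap''
    fun_prop (disch := intro x hx; simp only [mem_Icc] at hx; apply ne_of_gt; linarith [hx.1, hx.2])
  have hsign : (0 : ℝ) ∈ Ioo (gap'' (1/2)) (gap'' (1/4)) := by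
    constructor <;> norm_num [gap''] <;> linarith
  exact intermediate_value_Ioo' (by norm_num) hcont hsign

lemma convexOn_gap {m : ℝ} (hm : m ∈ Ioo 0 1) (hm0 : gap'' m = 0) :
    ConvexOn ℝ (Icc 0 m) gap := by
  refine convexOn_of_hasDerivWithinAt2_nonneg (f' := gap') (f'' := gap'') (convex_Icc 0 m)
    continuous_gap.continuousOn (fun x hx => ?_) (fun x hx => ?_) (fun x hx => ?_) <;>
    rw [interior_Icc] at hx
  · exact (hasDerivAt_gap hx.1 (hx.2.trans hm.2)).hasDerivWithinAt
  · exact (hasDerivAt_gap' hx.1 (hx.2.trans hm.2)).hasDerivWithinAt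
  · exact hm0 ▸ (gap''_strictAntiOn ⟨hx.1, hx.2.trans hm.2⟩ hm hx.2).le

lemma concaveOn_gap {m : ℝ} (hm : m ∈ Ioo 0 1) (hm0 : gap'' m = 0) :
    ConcaveOn ℝ (Icc m 1) gap := by
  refine concaveOn_of_hasDerivWithinAt2_nonpos (f' := gap') (f'' := gap'') (convex_Icc m 1)
    continuous_gap.continuousOn (fun x hx => ?_) (fun x hx => ?_) (fun x hx => ?_) <;>
    rw [interior_Icc] at hx
  · exact (hasDerivAt_gap (hm.1.trans hx.1) hx.2).hasDerivWithinAt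
  · exact (hasDerivAt_gap' (hm.1.trans hx.1) hx.2).hasDerivWithinAt
  · exact hm0 ▸ (gap''_strictAntiOn hm ⟨hm.1.trans hx.1, hx.2⟩ hx.1).le

lemma gap_nonpos {a : ℝ} (ha : a ∈ Icc 0 1) : gap a ≤ 0 := by
  obtain ⟨m, ⟨hm14, hm12⟩, hm0⟩ := exists_gap''_eq_zero
  have hm : m ∈ Ioo 0 1 := ⟨by linarith, by linarith⟩
  have hd : HasDerivAt gap 0 (1/2) := gap'_half ▸ hasDerivAt_gap (by norm_num) (by norm_num)
  have hmax := isMaxOn_Icc_of_convexOn_of_concaveOn (convexOn_gap hm hm0) (concaveOn_gap hm hm0)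
    ⟨hm12, by norm_num⟩ hd (by rw [gap_zero, gap_half])
  exact gap_half ▸ hmax ha

lemma KL_output_sub_mul_KL_input (r : Fin 2 → ℝ) (hr : r 0 + r 1 = 1) :
    KL (fun y => ∑ x, r x * Wch x y) (fun y => ∑ x, pX x * Wch x y) - sStarVal * KL r pX
      = gap (r 0) := by
  obtain ⟨a, rfl⟩ : ∃ a, r = ![a, 1 - a] := ⟨r 0, by
    ext i; fin_cases i
    exacts [rfl, eq_sub_of_add_eq' hr]⟩
  have hpY : ∀ y, ∑ x, pX x * Wch x y ≠ 0 := by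
    intro y; fin_cases y <;> norm_num [Fin.sum_univ_two, pX, Wch]
  rw [KL_eq_sum_mul_klFun hpY, KL_eq_sum_mul_klFun (by norm_num [pX])]
  · simp only [Fin.sum_univ_two, Fin.sum_univ_three, Wch, pX, gap, Matrix.cons_val]
    ring_nf
  · norm_num [Fin.sum_univ_two, pX]
  · simp only [Fin.sum_univ_two, Fin.sum_univ_three, Wch, pX, Matrix.cons_val]
    ring

lemma KL_pX_pos {r : Fin 2 → ℝ} (hr : IsPMF r) (hne : r ≠ pX) : 0 < KL r pX :=
  KL_pos hr.1 (fun _ => by norm_num [pX]) (by rw [hr.2]; norm_num [pX]) hne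

lemma sStar_pX_Wch : sStar pX Wch = sStarVal := by
  have hgap : ∀ r, IsPMF r → KL (fun y => ∑ x, r x * Wch x y) (fun y => ∑ x, pX x * Wch x y)
      - sStarVal * KL r pX = gap (r 0) := fun r hr =>
    KL_output_sub_mul_KL_input r (by simpa [Fin.sum_univ_two] using hr.2)
  have hpmf : IsPMF ![0, 1] := ⟨fun x => by fin_cases x <;> norm_num, by norm_num⟩
  have hne : ![0, 1] ≠ pX := fun h => by simpa [pX] using congrFun h 0
  refine IsGreatest.csSup_eq ⟨⟨![0, 1], hpmf, hne, ?_⟩, ?_⟩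
  · have h := hgap _ hpmf
    rw [Matrix.cons_val_zero, gap_zero] at h
    rw [eq_div_iff (KL_pX_pos hpmf hne).ne']
    linarith
  · rintro c ⟨r, hr, hne, rfl⟩
    have hr0 : r 0 ∈ Icc 0 1 := ⟨hr.1 0, by linarith [hr.1 1, Fin.sum_univ_two r ▸ hr.2]⟩
    rw [div_le_iff₀ (KL_pX_pos hr hne)]
    linarith [hgap r hr, gap_nonpos hr0]

lemma sum_pXY_mul_left (f : Fin 2 → ℝ) : ∑ x, ∑ y, pXY x y * f x = (f 0 + f 1)/2 := by
  simp only [Fin.sum_univ_two, Fin.sum_univ_three, pXY, pX, Wch, Matrix.cons_val]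
  ring

lemma sum_pXY_mul_right (g : Fin 3 → ℝ) :
    ∑ x, ∑ y, pXY x y * g y = g 0/3 + 5 * g 1/12 + g 2/4 := by
  simp only [Fin.sum_univ_two, Fin.sum_univ_three, pXY, pX, Wch, Matrix.cons_val]
  ring

lemma sum_pXY_mul_mul (f : Fin 2 → ℝ) (g : Fin 3 → ℝ) :
    ∑ x, ∑ y, pXY x y * f x * g y = f 0 * (g 0/3 + g 1/6) + f 1 * (g 1/4 + g 2/4) := by
  simp only [Fin.sum_univ_two, Fin.sum_univ_three, pXY, pX, Wch, Matrix.cons_val]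
  ring

lemma corr_pXY_le {f : Fin 2 → ℝ} {g : Fin 3 → ℝ} (hf : ∑ x, ∑ y, pXY x y * f x = 0)
    (hf2 : ∑ x, ∑ y, pXY x y * f x ^ 2 = 1) (hg2 : ∑ x, ∑ y, pXY x y * g y ^ 2 = 1) :
    ∑ x, ∑ y, pXY x y * f x * g y ≤ √(3/5) := by
  rw [sum_pXY_mul_left] at hf
  rw [sum_pXY_mul_left (fun x => f x ^ 2)] at hf2
  rw [sum_pXY_mul_right (fun y => g y ^ 2)] at hg2
  have hf1 : f 1 = -f 0 := by linarith
  have hf0 : f 0 ^ 2 = 1 := by rw [hf1] at hf2; linarith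
  -- Cauchy–Schwarz in `L²(P_Y)` against `(1, -1/5, -1)`, whose second moment is `3/5`
  have hcs : (g 0/3 - g 1/12 - g 2/4) ^ 2 ≤ 3/5 * (g 0 ^ 2/3 + 5 * g 1 ^ 2/12 + g 2 ^ 2/4) := by
    nlinarith [sq_nonneg (g 0/5 + g 1), sq_nonneg (g 0 + g 2), sq_nonneg (g 1 - g 2/5)]
  have hcorr : ∑ x, ∑ y, pXY x y * f x * g y = f 0 * (g 0/3 - g 1/12 - g 2/4) := by
    rw [sum_pXY_mul_mul, hf1]
    ring
  refine (le_abs_self _).trans (abs_le_sqrt ?_)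
  rw [hcorr, mul_pow, hf0, one_mul]
  linarith

lemma maxCorr_pXY : maxCorr pXY = √(3/5) := by
  set k := √(5/3)
  have hk : k ^ 2 = 5/3 := sq_sqrt (by norm_num)
  have hsqrt : √(3/5) = 3/5 * k := by
    rw [eq_comm, ← sqrt_sq (by positivity : 0 ≤ 3/5 * k), mul_pow, hk]
    norm_num
  refine IsGreatest.csSup_eq ⟨⟨![1, -1], ![k, -k/5, -k], ?_, ?_, ?_, ?_, ?_⟩, ?_⟩
  · rw [sum_pXY_mul_left]; simp
  · rw [sum_pXY_mul_right]; simp only [Matrix.cons_val]; ring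
  · rw [sum_pXY_mul_left (fun x => _ ^ 2)]; simp
  · rw [sum_pXY_mul_right (fun y => _ ^ 2)]; simp only [Matrix.cons_val]
    linear_combination 3/5 * hk
  · rw [sum_pXY_mul_mul, hsqrt]; simp only [Matrix.cons_val]; ring
  · rintro c ⟨f, g, hf, -, hf2, hg2, rfl⟩
    exact corr_pXY_le hf hf2 hg2

end ErasureChannel

/-- for `X ∼ Bernoulli(1/2)` through the asymmetric erasure channel,
`s*(X;Y) = (1/2)·log₂(12/5)`, which exceeds `ρ_m(X;Y)² = 3/5`. -/
theorem sStar_erasure_channel :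
    sStar pX Wch = (1/2) * (Real.log (12/5) / Real.log 2) ∧
    (maxCorr pXY)^2 = 3/5 ∧
    (3/5 : ℝ) < (1/2) * (Real.log (12/5) / Real.log 2) :=
  ⟨ErasureChannel.sStar_pX_Wch, by rw [ErasureChannel.maxCorr_pXY, sq_sqrt (by norm_num)],
    ErasureChannel.three_fifths_lt_sStarVal⟩
end

section
/- Fix a channel p(y|x) and λ ∈ [0,1], and define t_λ(q) := H(Y_q) − λ H(q) for input distributions q on 𝒳, where Y_q is the channel output under input q and H denotes Shannon entropy. If t_λ coincides with its lower convex envelope at a point p, then for every λ₁ ≥ λ, t_{λ₁} coincides with its lower convex envelope at p. -/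
open scoped BigOperators

/-- The lower convex envelope of `f` on the probability simplex, evaluated at `q`:
the pointwise supremum of convex minorants of `f`. -/
noncomputable def lce {X : Type*} [Fintype X] (f : (X → ℝ) → ℝ) (q : X → ℝ) : ℝ :=
  sSup {c : ℝ | ∃ g : (X → ℝ) → ℝ, ConvexOn ℝ {r : X → ℝ | IsPMF r} g ∧
    (∀ r, IsPMF r → g r ≤ f r) ∧ c = g q}

/-- `t_λ(q) = H(Y_q) − λ H(q)` for the channel `W`. -/
noncomputable def tFun {X Y : Type*} [Fintype X] [Fintype Y]
    (W : X → Y → ℝ) (lam : ℝ) (q : X → ℝ) : ℝ :=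
  entropy (fun y => ∑ x, q x * W x y) - lam * entropy q


section AuxEnv

variable {X : Type*} [Fintype X]

lemma simplex_convex' : Convex ℝ {r : X → ℝ | IsPMF r} := by
  intro r hr s hs a b ha hb hab
  constructor
  · intro x
    have h1 := hr.1 x; have h2 := hs.1 x
    have : 0 ≤ a * r x + b * s x := by positivity
    simpa [Pi.add_apply, smul_eq_mul] using this
  · simp only [Pi.add_apply, Pi.smul_apply, smul_eq_mul]
    rw [Finset.sum_add_distrib, ← Finset.mul_sum, ← Finset.mul_sum, hr.2, hs.2]
    linarith

lemma entropy_concave' : ConcaveOn ℝ {r : X → ℝ | IsPMF r} entropy := by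
  constructor
  · exact simplex_convex'
  · intro r hr s hs a b ha hb hab
    simp only [smul_eq_mul, entropy]
    rw [Finset.mul_sum, Finset.mul_sum, ← Finset.sum_add_distrib]
    apply Finset.sum_le_sum
    intro x _
    have h := Real.strictConcaveOn_negMulLog.concaveOn.2
      (Set.mem_Ici.mpr (hr.1 x)) (Set.mem_Ici.mpr (hs.1 x)) ha hb hab
    simpa [smul_eq_mul] using h

lemma negMulLog_le_one' {x : ℝ} (hx : 0 ≤ x) : Real.negMulLog x ≤ 1 := by
  rcases eq_or_lt_of_le hx with h | h
  · simp [← h, Real.negMulLog]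
  · have hinv : Real.log x⁻¹ ≤ x⁻¹ - 1 := Real.log_le_sub_one_of_pos (by positivity)
    rw [Real.log_inv] at hinv
    rw [Real.negMulLog]
    nlinarith [mul_le_mul_of_nonneg_left hinv (le_of_lt h), mul_inv_cancel₀ (ne_of_gt h)]

lemma entropy_le_card' {q : X → ℝ} (hq : ∀ x, 0 ≤ q x) :
    entropy q ≤ Fintype.card X := by
  rw [entropy]
  calc ∑ x, Real.negMulLog (q x) ≤ ∑ _x : X, (1:ℝ) :=
        Finset.sum_le_sum fun x _ => negMulLog_le_one' (hq x)
    _ = Fintype.card X := by simp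

lemma entropy_nonneg' {q : X → ℝ} (hq : IsPMF q) : 0 ≤ entropy q := by
  apply Finset.sum_nonneg
  intro x _
  apply Real.negMulLog_nonneg (hq.1 x)
  calc q x ≤ ∑ x', q x' := Finset.single_le_sum (fun i _ => hq.1 i) (Finset.mem_univ x)
    _ = 1 := hq.2

lemma outPMF' {Y : Type*} [Fintype Y] {W : X → Y → ℝ} (hW : ∀ x, IsPMF (W x))
    {q : X → ℝ} (hq : IsPMF q) : IsPMF (fun y => ∑ x, q x * W x y) := by
  constructor
  · intro y
    exact Finset.sum_nonneg fun x _ => mul_nonneg (hq.1 x) ((hW x).1 y)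
  · rw [Finset.sum_comm]
    calc ∑ x, ∑ y, q x * W x y = ∑ x, q x * ∑ y, W x y := by
          simp [Finset.mul_sum]
      _ = ∑ x, q x := by simp [fun x => (hW x).2]
      _ = 1 := hq.2

lemma tFun_lb {Y : Type*} [Fintype Y] {W : X → Y → ℝ} (hW : ∀ x, IsPMF (W x))
    {q : X → ℝ} (hq : IsPMF q) {l : ℝ} (hl : 0 ≤ l) :
    -(l * Fintype.card X) ≤ tFun W l q := by
  have h1 : 0 ≤ entropy (fun y => ∑ x, q x * W x y) := entropy_nonneg' (outPMF' hW hq)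
  have h2 : entropy q ≤ Fintype.card X := entropy_le_card' hq.1
  have h3 : l * entropy q ≤ l * Fintype.card X := mul_le_mul_of_nonneg_left h2 hl
  rw [tFun]
  linarith

end AuxEnv

/-- if `t_λ` coincides with its lower convex envelope at `p`, then so does
`t_{λ₁}` for every `λ₁ ≥ λ`. -/
theorem touch_envelope_monotone {X Y : Type*} [Fintype X] [Fintype Y]
    (W : X → Y → ℝ) (hW : ∀ x, IsPMF (W x))
    (p : X → ℝ) (hp : IsPMF p) (lam lam₁ : ℝ)
    (hlam0 : 0 ≤ lam) (hlam1 : lam ≤ 1) (hle : lam ≤ lam₁)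
    (htouch : lce (tFun W lam) p = tFun W lam p) :
    lce (tFun W lam₁) p = tFun W lam₁ p := by
  set c := lam₁ - lam with hcdef
  have hc0 : 0 ≤ c := by simp [hcdef]; linarith
  have hsplit : ∀ r : X → ℝ, tFun W lam₁ r = tFun W lam r - c * entropy r := by
    intro r; simp only [tFun, hcdef]; ring
  -- transfer of convex minorants
  have transfer : ∀ g : (X → ℝ) → ℝ, ConvexOn ℝ {r : X → ℝ | IsPMF r} g →
      (∀ r, IsPMF r → g r ≤ tFun W lam r) →
      ConvexOn ℝ {r : X → ℝ | IsPMF r} (fun r => g r - c * entropy r) ∧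
      (∀ r, IsPMF r → g r - c * entropy r ≤ tFun W lam₁ r) := by
    intro g hcv hmin
    constructor
    · have h1 : ConvexOn ℝ {r : X → ℝ | IsPMF r} (-(fun r => c • entropy r)) :=
        (entropy_concave'.smul hc0).neg
      have h2 := hcv.add h1
      have heq : (fun r : X → ℝ => g r - c * entropy r)
          = (fun r => g r + (-(fun r => c • entropy r)) r) := by
        funext r; simp [sub_eq_add_neg, smul_eq_mul]
      rw [heq]; exact h2
    · intro r hr
      rw [hsplit r]
      have := hmin r hr
      linarith
  -- sets
  have hub : ∀ a ∈ {c : ℝ | ∃ g : (X → ℝ) → ℝ, ConvexOn ℝ {r : X → ℝ | IsPMF r} g ∧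
      (∀ r, IsPMF r → g r ≤ tFun W lam₁ r) ∧ c = g p}, a ≤ tFun W lam₁ p := by
    rintro a ⟨g, hcv, hmin, rfl⟩
    exact hmin p hp
  have hbdd : BddAbove {c : ℝ | ∃ g : (X → ℝ) → ℝ, ConvexOn ℝ {r : X → ℝ | IsPMF r} g ∧
      (∀ r, IsPMF r → g r ≤ tFun W lam₁ r) ∧ c = g p} := ⟨tFun W lam₁ p, hub⟩
  -- the constant minorant of tFun W lam
  have hg0cv : ConvexOn ℝ {r : X → ℝ | IsPMF r}
      (fun _ : X → ℝ => -(lam * (Fintype.card X : ℝ))) := convexOn_const _ simplex_convex'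
  have hg0min : ∀ r, IsPMF r → -(lam * (Fintype.card X : ℝ)) ≤ tFun W lam r :=
    fun r hr => tFun_lb hW hr hlam0
  have hne0 : Set.Nonempty {c : ℝ | ∃ g : (X → ℝ) → ℝ,
      ConvexOn ℝ {r : X → ℝ | IsPMF r} g ∧
      (∀ r, IsPMF r → g r ≤ tFun W lam r) ∧ c = g p} :=
    ⟨_, _, hg0cv, hg0min, rfl⟩
  have hne1 : Set.Nonempty {c : ℝ | ∃ g : (X → ℝ) → ℝ,
      ConvexOn ℝ {r : X → ℝ | IsPMF r} g ∧
      (∀ r, IsPMF r → g r ≤ tFun W lam₁ r) ∧ c = g p} := by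
    obtain ⟨h1, h2⟩ := transfer _ hg0cv hg0min
    exact ⟨_, _, h1, h2, rfl⟩
  apply le_antisymm
  · exact csSup_le hne1 hub
  · -- lower bound
    have key : lce (tFun W lam) p ≤ lce (tFun W lam₁) p + c * entropy p := by
      apply csSup_le hne0
      rintro a ⟨g, hcv, hmin, rfl⟩
      obtain ⟨h1, h2⟩ := transfer g hcv hmin
      have hmem : g p - c * entropy p ∈ {c : ℝ | ∃ g : (X → ℝ) → ℝ,
          ConvexOn ℝ {r : X → ℝ | IsPMF r} g ∧
          (∀ r, IsPMF r → g r ≤ tFun W lam₁ r) ∧ c = g p} := ⟨_, h1, h2, rfl⟩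
      have := le_csSup hbdd hmem
      have hlce : lce (tFun W lam₁) p = sSup {c : ℝ | ∃ g : (X → ℝ) → ℝ,
          ConvexOn ℝ {r : X → ℝ | IsPMF r} g ∧
          (∀ r, IsPMF r → g r ≤ tFun W lam₁ r) ∧ c = g p} := rfl
      rw [hlce]
      linarith
    rw [htouch] at key
    rw [hsplit p]
    have hlce : lce (tFun W lam₁) p = sSup {c : ℝ | ∃ g : (X → ℝ) → ℝ,
        ConvexOn ℝ {r : X → ℝ | IsPMF r} g ∧
        (∀ r, IsPMF r → g r ≤ tFun W lam₁ r) ∧ c = g p} := rfl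
    rw [hlce]
    linarith
end

section
/- Fix a channel p(y|x) and λ ∈ [0,1]. The function t_λ(q) = H(Y_q) − λ H(q) on input distributions q coincides with its lower convex envelope at p if and only if for every finite-valued U with U - X - Y Markov and X ∼ p, one has H(Y) − λH(X) ≤ H(Y|U) − λH(X|U), equivalently I(U;Y) ≤ λ I(U;X). -/
open scoped BigOperators

/-!
`t_λ` extends to the positively homogeneous function `tFunHom W lam v = m * t_λ(m⁻¹ • v)`,
`m = ∑ x, v x`, on the nonnegative orthant, and for every decomposition `p = ∑ u, q u` into
nonnegative parts `λ I(U;X) - I(U;Y) = ∑ u, tFunHom W lam (q u) - t_λ(p)`. Jensen's inequality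
for convex minorants gives `𝒦[t_λ](p) ≤ ∑ u, tFunHom W lam (q u)`, so the inequality holds when
the envelope touches. Conversely, the infimum of `∑ u, tFunHom W lam (q u)` over all
decompositions of `r` is a convex minorant of `t_λ` (decompositions of `r₁` and `r₂` concatenate
to one of `a • r₁ + b • r₂`), and the inequality says that it equals `t_λ` at `p`.
-/

open Real Finset
open scoped Pointwise

section EntropyGap

variable {X : Type*} [Fintype X]

/-- For `v ≥ 0` of total mass `m > 0` this is `m * entropy (m⁻¹ • v)`: the positively homogeneous
extension of entropy to the nonnegative orthant. -/
noncomputable def entropyGap (v : X → ℝ) : ℝ :=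
  ∑ x, negMulLog (v x) - negMulLog (∑ x, v x)

theorem entropyGap_eq_entropy {v : X → ℝ} (hv : ∑ x, v x = 1) : entropyGap v = entropy v := by
  simp [entropyGap, entropy, hv]

theorem entropyGap_smul (c : ℝ) (v : X → ℝ) : entropyGap (c • v) = c * entropyGap v := by
  simp only [entropyGap, Pi.smul_apply, smul_eq_mul, ← mul_sum, negMulLog_mul, sum_add_distrib,
    ← sum_mul]
  ring

theorem entropyGap_nonneg {v : X → ℝ} (hv : 0 ≤ v) : 0 ≤ entropyGap v := by
  have hle : ∀ x, -(v x * log (∑ y, v y)) ≤ negMulLog (v x) := fun x => by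
    rcases (hv x).eq_or_lt with h | h
    · simp [← h]
    rw [negMulLog, neg_mul, neg_le_neg_iff]
    exact mul_le_mul_of_nonneg_left
      (log_le_log h (single_le_sum (fun y _ => hv y) (mem_univ x))) h.le
  have := sum_le_sum fun x (_ : x ∈ univ) => hle x
  rw [sum_neg_distrib, ← sum_mul] at this
  rw [entropyGap, negMulLog, neg_mul]
  linarith

theorem entropyGap_le_mul_log_card {v : X → ℝ} (hv : 0 ≤ v) :
    entropyGap v ≤ (∑ x, v x) * log (Fintype.card X) := by
  rcases isEmpty_or_nonempty X with hX | hX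
  · simp [entropyGap]
  set N : ℝ := (Fintype.card X : ℝ)
  have hN : 0 < N := by positivity
  have hpt : ∀ x, N⁻¹ • negMulLog (N * v x) = negMulLog (v x) - v x * log N := fun x => by
    rw [smul_eq_mul, negMulLog_mul, negMulLog]
    field_simp
    ring
  have hpts : ∀ x, N⁻¹ • (N * v x) = v x := fun x => by
    rw [smul_eq_mul, inv_mul_cancel_left₀ hN.ne']
  -- Jensen for the concave `negMulLog` at the points `N * v x` with uniform weights `N⁻¹`
  have jensen := concaveOn_negMulLog.le_map_sum (t := univ) (w := fun _ : X => N⁻¹)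
    (p := fun x => N * v x) (fun _ _ => by positivity)
    (by simp [N]) (fun x _ => mul_nonneg hN.le (hv x))
  simp only [hpt, hpts, sum_sub_distrib, ← sum_mul] at jensen
  rw [entropyGap]
  linarith

end EntropyGap

section Channel

variable {X Y : Type*} [Fintype X]

def channelOut (W : X → Y → ℝ) (v : X → ℝ) (y : Y) : ℝ := ∑ x, v x * W x y

theorem channelOut_smul (W : X → Y → ℝ) (c : ℝ) (v : X → ℝ) :
    channelOut W (c • v) = c • channelOut W v := by
  ext y
  simp only [channelOut, Pi.smul_apply, smul_eq_mul, mul_sum, mul_assoc]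

theorem channelOut_nonneg {W : X → Y → ℝ} (hW : ∀ x y, 0 ≤ W x y) {v : X → ℝ} (hv : 0 ≤ v) :
    0 ≤ channelOut W v := fun y =>
  sum_nonneg fun x _ => mul_nonneg (hv x) (hW x y)

variable [Fintype Y]

theorem sum_channelOut {W : X → Y → ℝ} (hW : ∀ x, ∑ y, W x y = 1) (v : X → ℝ) :
    ∑ y, channelOut W v y = ∑ x, v x := by
  simp only [channelOut]
  rw [sum_comm]
  simp [← mul_sum, hW]

theorem tFun_eq_entropy_channelOut (W : X → Y → ℝ) (lam : ℝ) (r : X → ℝ) :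
    tFun W lam r = entropy (channelOut W r) - lam * entropy r :=
  rfl

noncomputable def tFunHom (W : X → Y → ℝ) (lam : ℝ) (v : X → ℝ) : ℝ :=
  entropyGap (channelOut W v) - lam * entropyGap v

theorem tFunHom_smul (W : X → Y → ℝ) (lam c : ℝ) (v : X → ℝ) :
    tFunHom W lam (c • v) = c * tFunHom W lam v := by
  simp only [tFunHom, channelOut_smul, entropyGap_smul]
  ring

theorem tFunHom_eq_tFun {W : X → Y → ℝ} (hW : ∀ x, ∑ y, W x y = 1) (lam : ℝ) {r : X → ℝ}
    (hr : ∑ x, r x = 1) : tFunHom W lam r = tFun W lam r := by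
  rw [tFunHom, entropyGap_eq_entropy hr, entropyGap_eq_entropy (by rw [sum_channelOut hW, hr]),
    tFun_eq_entropy_channelOut]

theorem tFunHom_eq_sum_mul_tFun {W : X → Y → ℝ} (hW : ∀ x, ∑ y, W x y = 1) (lam : ℝ)
    {v : X → ℝ} (hv : 0 ≤ v) :
    tFunHom W lam v = (∑ x, v x) * tFun W lam ((∑ x, v x)⁻¹ • v) := by
  rcases eq_or_ne (∑ x, v x) 0 with h | h
  · have hv0 : v = 0 := funext ((sum_eq_zero_iff_of_nonneg fun x _ => hv x).1 h · (mem_univ _))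
    simp [hv0, tFunHom, entropyGap, channelOut]
  rw [← tFunHom_eq_tFun hW lam (by simp [← mul_sum, h]), tFunHom_smul, mul_inv_cancel_left₀ h]

theorem neg_abs_mul_le_tFunHom {W : X → Y → ℝ} (hW : ∀ x, IsPMF (W x)) (lam : ℝ) {v : X → ℝ}
    (hv : 0 ≤ v) : -(|lam| * log (Fintype.card X)) * ∑ x, v x ≤ tFunHom W lam v := by
  have hgap := entropyGap_le_mul_log_card hv
  have hout := entropyGap_nonneg (channelOut_nonneg (fun x => (hW x).1) hv)
  have hlam : lam * entropyGap v ≤ |lam| * entropyGap v :=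
    mul_le_mul_of_nonneg_right (le_abs_self lam) (entropyGap_nonneg hv)
  rw [tFunHom]
  nlinarith [abs_nonneg lam]

theorem mutInfo_eq_entropy_sub_sum_entropyGap {U : Type*} [Fintype U] (q : U → X → ℝ) :
    mutInfo q = entropy (fun x => ∑ u, q u x) - ∑ u, entropyGap (q u) := by
  simp only [mutInfo, entropyGap, entropy, sum_sub_distrib, Fintype.sum_prod_type]
  ring

theorem mul_mutInfo_sub_mutInfo_eq {U : Type*} [Fintype U] (W : X → Y → ℝ) (lam : ℝ)
    {p : X → ℝ} {q : U → X → ℝ} (hqp : ∀ x, ∑ u, q u x = p x) :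
    lam * mutInfo q - mutInfo (fun u => channelOut W (q u))
      = ∑ u, tFunHom W lam (q u) - tFun W lam p := by
  have hY : (fun y => ∑ u, channelOut W (q u) y) = channelOut W p := by
    ext y
    simp only [channelOut]
    rw [sum_comm]
    simp [← sum_mul, hqp]
  rw [mutInfo_eq_entropy_sub_sum_entropyGap, mutInfo_eq_entropy_sub_sum_entropyGap, hY,
    tFun_eq_entropy_channelOut]
  simp only [hqp, tFunHom, sum_sub_distrib, ← mul_sum]
  ring

theorem mutInfo_le_mul_mutInfo_iff {U : Type*} [Fintype U] (W : X → Y → ℝ) (lam : ℝ)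
    {p : X → ℝ} {q : U → X → ℝ} (hqp : ∀ x, ∑ u, q u x = p x) :
    mutInfo (fun u y => ∑ x, q u x * W x y) ≤ lam * mutInfo q ↔
      tFun W lam p ≤ ∑ u, tFunHom W lam (q u) := by
  have := mul_mutInfo_sub_mutInfo_eq W lam hqp
  constructor <;> intro <;> unfold channelOut at this <;> linarith

end Channel

section LowerConvexEnvelope

variable {X : Type*} [Fintype X] {f : (X → ℝ) → ℝ} {p : X → ℝ}

theorem isPMF_inv_sum_smul {v : X → ℝ} (hv : 0 ≤ v) (h : ∑ x, v x ≠ 0) :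
    IsPMF ((∑ x, v x)⁻¹ • v) :=
  ⟨fun x => mul_nonneg (inv_nonneg.2 (sum_nonneg fun y _ => hv y)) (hv x),
    by simp [← mul_sum, h]⟩

theorem le_lce {g : (X → ℝ) → ℝ} (hg : ConvexOn ℝ {r | IsPMF r} g)
    (hgf : ∀ r, IsPMF r → g r ≤ f r) (hp : IsPMF p) : g p ≤ lce f p :=
  le_csSup ⟨f p, by rintro _ ⟨g', -, hg'f, rfl⟩; exact hg'f p hp⟩ ⟨g, hg, hgf, rfl⟩

theorem lce_le_of_forall_le {b : ℝ} (hf : ∃ m, ∀ r, IsPMF r → m ≤ f r)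
    (h : ∀ g, ConvexOn ℝ {r | IsPMF r} g → (∀ r, IsPMF r → g r ≤ f r) → g p ≤ b) :
    lce f p ≤ b := by
  obtain ⟨m, hm⟩ := hf
  refine csSup_le ⟨m, fun _ => m, convexOn_const m (convex_stdSimplex ℝ X), hm, rfl⟩ ?_
  rintro _ ⟨g, hg, hgf, rfl⟩
  exact h g hg hgf

theorem lce_le_apply (hf : ∃ m, ∀ r, IsPMF r → m ≤ f r) (hp : IsPMF p) : lce f p ≤ f p :=
  lce_le_of_forall_le hf fun _ _ hgf => hgf p hp

theorem lce_le_sum_mul {ι : Type*} [Fintype ι] (hf : ∃ m, ∀ r, IsPMF r → m ≤ f r)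
    (hp : IsPMF p) (q : ι → X → ℝ) (hq : ∀ u x, 0 ≤ q u x) (hqp : ∀ x, ∑ u, q u x = p x) :
    lce f p ≤ ∑ u, (∑ x, q u x) * f ((∑ x, q u x)⁻¹ • q u) := by
  classical
  refine lce_le_of_forall_le hf fun g hg hgf => ?_
  set mass : ι → ℝ := fun u => ∑ x, q u x
  set s := univ.filter fun u => mass u ≠ 0
  have hzero : ∀ u, mass u = 0 → q u = 0 := fun u hu =>
    funext ((sum_eq_zero_iff_of_nonneg fun x _ => hq u x).1 hu · (mem_univ _))
  have hsum_s : ∀ F : ι → ℝ, (∀ u, mass u = 0 → F u = 0) → ∑ u ∈ s, F u = ∑ u, F u :=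
    fun F hF => sum_filter_of_ne fun u _ hFu hu => hFu (hF u hu)
  have hpmf : ∀ u ∈ s, IsPMF ((mass u)⁻¹ • q u) := fun u hu =>
    isPMF_inv_sum_smul (hq u) (mem_filter.1 hu).2
  have hmix : ∑ u ∈ s, mass u • ((mass u)⁻¹ • q u) = p := by
    have hqs : ∑ u ∈ s, q u = ∑ u, q u := sum_filter_of_ne fun u _ hqu hu => hqu (hzero u hu)
    rw [sum_congr rfl fun u hu => smul_inv_smul₀ (mem_filter.1 hu).2 (q u), hqs]
    ext x
    simp [hqp]
  have hmass : ∑ u ∈ s, mass u = 1 := by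
    rw [hsum_s mass fun _ h => h, sum_comm]
    simp only [hqp, hp.2]
  calc g p = g (∑ u ∈ s, mass u • ((mass u)⁻¹ • q u)) := by rw [hmix]
    _ ≤ ∑ u ∈ s, mass u • g ((mass u)⁻¹ • q u) :=
      hg.map_sum_le (fun u _ => sum_nonneg fun x _ => hq u x) hmass hpmf
    _ ≤ ∑ u ∈ s, mass u * f ((mass u)⁻¹ • q u) := sum_le_sum fun u hu =>
      mul_le_mul_of_nonneg_left (hgf _ (hpmf u hu)) (sum_nonneg fun x _ => hq u x)
    _ = ∑ u, mass u * f ((mass u)⁻¹ • q u) := hsum_s _ fun u hu => by rw [hu, zero_mul]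

end LowerConvexEnvelope

section Decomposition

variable {X : Type*} (φ : (X → ℝ) → ℝ)

def decompSums (r : X → ℝ) : Set ℝ :=
  {c | ∃ n, ∃ q : Fin n → X → ℝ, (∀ u x, 0 ≤ q u x) ∧ (∀ x, ∑ u, q u x = r x) ∧
    c = ∑ u, φ (q u)}

noncomputable def infDecomp (r : X → ℝ) : ℝ := sInf (decompSums φ r)

variable {φ}

theorem apply_mem_decompSums {r : X → ℝ} (hr : 0 ≤ r) : φ r ∈ decompSums φ r :=
  ⟨1, fun _ => r, fun _ => hr, by simp, by simp⟩

theorem smul_add_smul_subset_decompSums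
    (hφ : ∀ c : ℝ, 0 ≤ c → ∀ v, φ (c • v) = c * φ v) {a b : ℝ} (ha : 0 ≤ a) (hb : 0 ≤ b)
    (r₁ r₂ : X → ℝ) :
    a • decompSums φ r₁ + b • decompSums φ r₂ ⊆ decompSums φ (a • r₁ + b • r₂) := by
  rintro _ ⟨_, ⟨_, ⟨n₁, q₁, hq₁, hqr₁, rfl⟩, rfl⟩, _, ⟨_, ⟨n₂, q₂, hq₂, hqr₂, rfl⟩, rfl⟩, rfl⟩
  refine ⟨n₁ + n₂, Fin.append (fun u => a • q₁ u) (fun u => b • q₂ u), fun u x => ?_,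
    fun x => ?_, ?_⟩
  · refine Fin.addCases (fun i => ?_) (fun i => ?_) u
    · simpa using mul_nonneg ha (hq₁ i x)
    · simpa using mul_nonneg hb (hq₂ i x)
  · simp [Fin.sum_univ_add, ← mul_sum, hqr₁, hqr₂]
  · simp [Fin.sum_univ_add, hφ a ha, hφ b hb, mul_sum]

theorem le_infDecomp {r : X → ℝ} (hr : 0 ≤ r) {b : ℝ}
    (h : ∀ n (q : Fin n → X → ℝ), (∀ u x, 0 ≤ q u x) → (∀ x, ∑ u, q u x = r x) →
      b ≤ ∑ u, φ (q u)) :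
    b ≤ infDecomp φ r :=
  le_csInf ⟨_, apply_mem_decompSums hr⟩ fun _ ⟨n, q, hq, hqr, hc⟩ => hc ▸ h n q hq hqr

variable [Fintype X]

theorem bddBelow_decompSums {C : ℝ} (hφ : ∀ v, 0 ≤ v → -C * ∑ x, v x ≤ φ v) (r : X → ℝ) :
    BddBelow (decompSums φ r) := by
  refine ⟨-C * ∑ x, r x, ?_⟩
  rintro _ ⟨n, q, hq, hqr, rfl⟩
  calc -C * ∑ x, r x = ∑ u, -C * ∑ x, q u x := by rw [← mul_sum, sum_comm]; simp [hqr]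
    _ ≤ ∑ u, φ (q u) := sum_le_sum fun u _ => hφ (q u) (hq u)

theorem infDecomp_le {C : ℝ} (hφ : ∀ v, 0 ≤ v → -C * ∑ x, v x ≤ φ v) {r : X → ℝ}
    (hr : 0 ≤ r) : infDecomp φ r ≤ φ r :=
  csInf_le (bddBelow_decompSums hφ r) (apply_mem_decompSums hr)

theorem convexOn_infDecomp (hhom : ∀ c : ℝ, 0 ≤ c → ∀ v, φ (c • v) = c * φ v) {C : ℝ}
    (hφ : ∀ v, 0 ≤ v → -C * ∑ x, v x ≤ φ v) :
    ConvexOn ℝ (Set.Ici 0) (infDecomp φ) := by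
  refine ⟨convex_Ici 0, fun r₁ hr₁ r₂ hr₂ a b ha hb _ => ?_⟩
  have hne : ∀ {r : X → ℝ}, 0 ≤ r → ∀ {c : ℝ}, (c • decompSums φ r).Nonempty :=
    fun hr => (Set.nonempty_of_mem (apply_mem_decompSums hr)).smul_set
  have hbdd : ∀ r {c : ℝ}, 0 ≤ c → BddBelow (c • decompSums φ r) :=
    fun r _ hc => (bddBelow_decompSums hφ r).smul_of_nonneg hc
  calc infDecomp φ (a • r₁ + b • r₂)
      ≤ sInf (a • decompSums φ r₁ + b • decompSums φ r₂) :=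
        csInf_le_csInf (bddBelow_decompSums hφ _) ((hne hr₁).add (hne hr₂))
          (smul_add_smul_subset_decompSums hhom ha hb r₁ r₂)
    _ = a • infDecomp φ r₁ + b • infDecomp φ r₂ := by
        rw [csInf_add (hne hr₁) (hbdd r₁ ha) (hne hr₂) (hbdd r₂ hb),
          Real.sInf_smul_of_nonneg ha, Real.sInf_smul_of_nonneg hb]
        rfl

end Decomposition

theorem touch_envelope_iff_dpi_general {X Y : Type*} [Fintype X] [Fintype Y]
    (W : X → Y → ℝ) (hW : ∀ x, IsPMF (W x))
    (p : X → ℝ) (hp : IsPMF p) (lam : ℝ) :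
    lce (tFun W lam) p = tFun W lam p ↔
      ∀ (n : ℕ) (q : Fin n → X → ℝ), (∀ u x, 0 ≤ q u x) → (∀ x, ∑ u, q u x = p x) →
        mutInfo (fun u y => ∑ x, q u x * W x y) ≤ lam * mutInfo q := by
  have hWsum : ∀ x, ∑ y, W x y = 1 := fun x => (hW x).2
  have hlb := fun v (hv : 0 ≤ v) => neg_abs_mul_le_tFunHom hW lam hv
  have htlb : ∃ m, ∀ r, IsPMF r → m ≤ tFun W lam r := ⟨-(|lam| * log (Fintype.card X)),
    fun r hr => by simpa [hr.2, tFunHom_eq_tFun hWsum lam hr.2] using hlb r hr.1⟩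
  constructor
  · intro h n q hq hqp
    have hjensen := lce_le_sum_mul htlb hp q hq hqp
    rw [h, ← sum_congr rfl fun u _ => tFunHom_eq_sum_mul_tFun hWsum lam (hq u)] at hjensen
    exact (mutInfo_le_mul_mutInfo_iff W lam hqp).2 hjensen
  · intro h
    have hK : ConvexOn ℝ {r | IsPMF r} (infDecomp (tFunHom W lam)) :=
      (convexOn_infDecomp (fun c _ => tFunHom_smul W lam c) hlb).subset (fun r hr => hr.1)
        (convex_stdSimplex ℝ X)
    have hKt : ∀ r, IsPMF r → infDecomp (tFunHom W lam) r ≤ tFun W lam r := fun r hr =>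
      tFunHom_eq_tFun hWsum lam hr.2 ▸ infDecomp_le hlb hr.1
    have htK : tFun W lam p ≤ infDecomp (tFunHom W lam) p := le_infDecomp hp.1 fun n q hq hqp =>
      (mutInfo_le_mul_mutInfo_iff W lam hqp).1 (h n q hq hqp)
    exact le_antisymm (lce_le_apply htlb hp) (htK.trans (le_lce hK hKt hp))

/-- `t_λ` coincides with its lower convex envelope at `p` iff for every
finite-valued `U` with `U - X - Y` Markov and `X ∼ p` (i.e. every joint pmf `q(u,x)` with
`X`-marginal `p`), `I(U;Y) ≤ λ I(U;X)`. -/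
theorem touch_envelope_iff_dpi {X Y : Type*} [Fintype X] [Fintype Y]
    (W : X → Y → ℝ) (hW : ∀ x, IsPMF (W x))
    (p : X → ℝ) (hp : IsPMF p) (lam : ℝ) (hlam0 : 0 ≤ lam) (hlam1 : lam ≤ 1) :
    lce (tFun W lam) p = tFun W lam p ↔
      ∀ (n : ℕ) (q : Fin n → X → ℝ), (∀ u x, 0 ≤ q u x) → (∀ x, ∑ u, q u x = p x) →
        mutInfo (fun u y => ∑ x, q u x * W x y) ≤ lam * mutInfo q :=
  touch_envelope_iff_dpi_general W hW p hp lam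
end

section
/- The function q ↦ H(Y_q) − H(q) (i.e., t_λ with λ = 1) is convex on the probability simplex of input distributions for any fixed channel p(y|x). -/
open scoped BigOperators

/-!
Write `s = a • p + b • r`. The concavity gap of entropy is a sum of divergences to the mixture:
`H(s) = a H(p) + b H(r) + a D(p‖s) + b D(r‖s)`, and since `q ↦ Y_q` is linear the same identity
holds at the output. Hence
`t(s) - a t(p) - b t(r) = a (D(Y_p‖Y_s) - D(p‖s)) + b (D(Y_r‖Y_s) - D(r‖s))`,
which is `≤ 0` by the data processing inequality for relative entropy, itself a consequence of the
log-sum inequality.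
-/

open Real Matrix Finset

lemma mul_log_add_sub_le_mul_log_div {a b c : ℝ} (ha : 0 ≤ a) (hb : 0 ≤ b)
    (hab : b = 0 → a = 0) (hc : 0 < c) :
    a * log c + a - b * c ≤ a * log (a / b) := by
  obtain rfl | ha := ha.eq_or_lt
  · simpa using mul_nonneg hb hc.le
  have hb : 0 < b := hb.lt_of_ne fun h => ha.ne' (hab h.symm)
  have key := log_le_sub_one_of_pos (div_pos (mul_pos hb hc) ha)
  rw [log_div (mul_pos hb hc).ne' ha.ne', log_mul hb.ne' hc.ne', le_sub_iff_add_le] at key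
  rw [log_div ha.ne' hb.ne']
  have := mul_le_mul_of_nonneg_left key ha.le
  rw [mul_div_cancel₀ _ ha.ne'] at this
  linarith

theorem sum_mul_log_div_le {ι : Type*} (s : Finset ι) {a b : ι → ℝ}
    (ha : ∀ i ∈ s, 0 ≤ a i) (hb : ∀ i ∈ s, 0 ≤ b i) (hab : ∀ i ∈ s, b i = 0 → a i = 0) :
    (∑ i ∈ s, a i) * log ((∑ i ∈ s, a i) / ∑ i ∈ s, b i) ≤ ∑ i ∈ s, a i * log (a i / b i) := by
  obtain hA | hA := (sum_nonneg ha).eq_or_lt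
  · have ha0 := (sum_eq_zero_iff_of_nonneg ha).1 hA.symm
    rw [sum_eq_zero ha0, zero_mul]
    exact (sum_eq_zero fun i hi => by rw [ha0 i hi, zero_mul]).ge
  have hB : 0 < ∑ i ∈ s, b i := by
    refine (sum_nonneg hb).lt_of_ne fun hB => hA.ne' ?_
    exact sum_eq_zero fun i hi => hab i hi ((sum_eq_zero_iff_of_nonneg hb).1 hB.symm i hi)
  set c := (∑ i ∈ s, a i) / ∑ i ∈ s, b i
  calc (∑ i ∈ s, a i) * log c = ∑ i ∈ s, (a i * log c + a i - b i * c) := by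
        rw [sum_sub_distrib, sum_add_distrib, ← sum_mul, ← sum_mul, mul_div_cancel₀ _ hB.ne']
        ring
    _ ≤ ∑ i ∈ s, a i * log (a i / b i) := sum_le_sum fun i hi =>
        mul_log_add_sub_le_mul_log_div (ha i hi) (hb i hi) (hab i hi) (div_pos hA hB)

lemma vecMul_apply_nonneg {X Y : Type*} [Fintype X] {W : Matrix X Y ℝ} (hW : ∀ x y, 0 ≤ W x y)
    {q : X → ℝ} (hq : ∀ x, 0 ≤ q x) (y : Y) : 0 ≤ (q ᵥ* W) y :=
  sum_nonneg fun x _ => mul_nonneg (hq x) (hW x y)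

theorem KL_vecMul_le_KL {X Y : Type*} [Fintype X] [Fintype Y] {W : Matrix X Y ℝ}
    (hW : ∀ x, IsPMF (W x)) {r q : X → ℝ} (hr : ∀ x, 0 ≤ r x) (hq : ∀ x, 0 ≤ q x)
    (hrq : ∀ x, q x = 0 → r x = 0) :
    KL (r ᵥ* W) (q ᵥ* W) ≤ KL r q := by
  have hterm : ∀ x y, r x * W x y * log (r x * W x y / (q x * W x y))
      = W x y * (r x * log (r x / q x)) := fun x y => by
    obtain hw | hw := ((hW x).1 y).eq_or_lt
    · simp [← hw]
    rw [mul_div_mul_right _ _ hw.ne']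
    ring
  calc KL (r ᵥ* W) (q ᵥ* W)
      ≤ ∑ y, ∑ x, r x * W x y * log (r x * W x y / (q x * W x y)) :=
        sum_le_sum fun y _ => sum_mul_log_div_le univ
          (fun x _ => mul_nonneg (hr x) ((hW x).1 y)) (fun x _ => mul_nonneg (hq x) ((hW x).1 y))
          fun x _ h => by obtain h | h := mul_eq_zero.1 h <;> simp [h, hrq]
    _ = KL r q := by
        simp only [hterm, KL]
        rw [sum_comm]
        exact sum_congr rfl fun x _ => by rw [← sum_mul, (hW x).2, one_mul]

lemma negMulLog_mul_add_mul {a b p r : ℝ} (ha : 0 ≤ a) (hb : 0 ≤ b) (hp : 0 ≤ p)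
    (hr : 0 ≤ r) :
    negMulLog (a * p + b * r) = a * negMulLog p + b * negMulLog r
      + a * (p * log (p / (a * p + b * r))) + b * (r * log (r / (a * p + b * r))) := by
  have split : ∀ {c u v : ℝ}, 0 ≤ c → 0 ≤ u → c * u ≤ v →
      c * (u * log (u / v)) = c * (u * log u) - c * u * log v := fun {c u v} hc hu huv => by
    obtain rfl | hc := hc.eq_or_lt
    · simp
    obtain rfl | hu := hu.eq_or_lt
    · simp
    rw [log_div hu.ne' (lt_of_lt_of_le (mul_pos hc hu) huv).ne']
    ring
  rw [split ha hp (by nlinarith), split hb hr (by nlinarith)]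
  simp only [negMulLog]
  ring

theorem entropy_smul_add_smul {X : Type*} [Fintype X] {a b : ℝ} {p r : X → ℝ}
    (ha : 0 ≤ a) (hb : 0 ≤ b) (hp : ∀ x, 0 ≤ p x) (hr : ∀ x, 0 ≤ r x) :
    entropy (a • p + b • r) = a * entropy p + b * entropy r
      + a * KL p (a • p + b • r) + b * KL r (a • p + b • r) := by
  simp only [entropy, KL, mul_sum, ← sum_add_distrib]
  exact sum_congr rfl fun x _ => negMulLog_mul_add_mul ha hb (hp x) (hr x)

/-- `q ↦ H(Y_q) − H(q)`, i.e. `t_λ` with `λ = 1`, is convex on the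
probability simplex. -/
theorem tFun_one_convex {X Y : Type*} [Fintype X] [Fintype Y]
    (W : X → Y → ℝ) (hW : ∀ x, IsPMF (W x)) :
    ConvexOn ℝ {q : X → ℝ | IsPMF q} (tFun W 1) := by
  refine convexOn_iff_forall_pos.2 ⟨convex_stdSimplex ℝ X, fun p hp r hr a b ha hb _ => ?_⟩
  set s := a • p + b • r
  have hdom : ∀ x, s x = 0 → p x = 0 ∧ r x = 0 := fun x hx => by
    have := mul_nonneg ha.le (hp.1 x); have := mul_nonneg hb.le (hr.1 x)
    simp only [s, Pi.add_apply, Pi.smul_apply, smul_eq_mul] at hx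
    constructor <;> nlinarith [hp.1 x, hr.1 x]
  have hs : ∀ x, 0 ≤ s x := fun x =>
    add_nonneg (smul_nonneg ha.le (hp.1 x)) (smul_nonneg hb.le (hr.1 x))
  have hdp := KL_vecMul_le_KL (W := of W) hW hp.1 hs fun x hx => (hdom x hx).1
  have hdr := KL_vecMul_le_KL (W := of W) hW hr.1 hs fun x hx => (hdom x hx).2
  have hout : s ᵥ* of W = a • (p ᵥ* of W) + b • (r ᵥ* of W) := by
    rw [add_vecMul, smul_vecMul, smul_vecMul]
  rw [hout] at hdp hdr
  have hWnn : ∀ x y, 0 ≤ of W x y := fun x => (hW x).1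
  show entropy (s ᵥ* of W) - 1 * entropy s ≤ a * (entropy (p ᵥ* of W) - 1 * entropy p)
    + b * (entropy (r ᵥ* of W) - 1 * entropy r)
  rw [hout, entropy_smul_add_smul ha.le hb.le (vecMul_apply_nonneg hWnn hp.1)
    (vecMul_apply_nonneg hWnn hr.1), entropy_smul_add_smul ha.le hb.le hp.1 hr.1]
  linarith [mul_le_mul_of_nonneg_left hdp ha.le, mul_le_mul_of_nonneg_left hdr hb.le]
end

section
/- For finite-valued random variables, ρ_m²(X;Y) ≤ sup over Markov chains U - X - Y with I(U;X) > 0 of I(U;Y)/I(U;X); in particular ρ_m²(X;Y) ≤ s*(X;Y). -/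
open scoped BigOperators

section AuxLemmas
open Finset Real

lemma aux_log_ge (t : ℝ) (ht : 0 < t) : 1 - 1/t ≤ Real.log t := by
  have h1 := Real.log_le_sub_one_of_pos (show (0:ℝ) < 1/t by positivity)
  have h2 : Real.log (1/t) = - Real.log t := by rw [one_div, Real.log_inv]
  rw [h2] at h1; linarith

lemma aux_gibbs_pt (a b : ℝ) (ha : 0 ≤ a) (hb : 0 ≤ b) (hab : 0 < a → 0 < b) :
    a - b ≤ a * Real.log (a / b) := by
  rcases eq_or_lt_of_le ha with h | h
  · simp [← h]; linarith
  · have hb' := hab h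
    have ht : 0 < a / b := by positivity
    have h0 := aux_log_ge (a/b) ht
    have h1 : (1:ℝ) - 1/(a/b) = 1 - b/a := by field_simp
    rw [h1] at h0
    have h2 := mul_le_mul_of_nonneg_left h0 h.le
    have h3 : a * (1 - b/a) = a - b := by field_simp
    linarith [h3 ▸ h2]

-- shifted pointwise for log-sum
lemma aux_logsum_pt (a b A B : ℝ) (ha : 0 ≤ a) (hb : 0 ≤ b) (hab : 0 < a → 0 < b)
    (hA : 0 < A) (hB : 0 < B) :
    a * (1 + Real.log (A/B)) - (A/B) * b ≤ a * Real.log (a/b) := by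
  rcases eq_or_lt_of_le ha with h | h
  · rw [← h]; simp
    positivity
  · have hb' := hab h
    have key : a - (A/B) * b ≤ a * (Real.log (a/b) - Real.log (A/B)) := by
      have h4 : Real.log (a/b) - Real.log (A/B) = Real.log ((a/b)/(A/B)) :=
        (Real.log_div (by positivity) (by positivity)).symm
      rw [h4]
      have := aux_gibbs_pt a ((A/B)*b) ha (by positivity) (fun _ => by positivity)
      have h5 : a / ((A/B)*b) = (a/b)/(A/B) := by field_simp
      rw [h5] at this; linarith
    nlinarith [key]

-- log-sum inequality
lemma aux_logsum {ι : Type*} [Fintype ι] (a b : ι → ℝ) (ha : ∀ i, 0 ≤ a i)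
    (hb : ∀ i, 0 ≤ b i) (hab : ∀ i, 0 < a i → 0 < b i) (hB : 0 < ∑ i, b i) :
    (∑ i, a i) * Real.log ((∑ i, a i)/(∑ i, b i)) ≤ ∑ i, a i * Real.log (a i / b i) := by
  rcases eq_or_lt_of_le (Finset.sum_nonneg (fun i (_ : i ∈ Finset.univ) => ha i)) with h | h
  · have hz := (Finset.sum_eq_zero_iff_of_nonneg (fun i (_ : i ∈ Finset.univ) => ha i)).mp h.symm
    rw [← h]
    simp only [zero_mul]
    apply le_of_eq
    symm
    apply Finset.sum_eq_zero
    intro i hi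
    rw [hz i hi, zero_mul]
  · have key : ∀ i ∈ Finset.univ,
        a i * (1 + Real.log ((∑ j, a j)/(∑ j, b j))) - ((∑ j, a j)/(∑ j, b j)) * b i
        ≤ a i * Real.log (a i / b i) :=
      fun i _ => aux_logsum_pt (a i) (b i) _ _ (ha i) (hb i) (hab i) h hB
    have hsum := Finset.sum_le_sum key
    rw [Finset.sum_sub_distrib, ← Finset.sum_mul, ← Finset.mul_sum] at hsum
    have hc : ((∑ j, a j)/(∑ j, b j)) * (∑ i, b i) = (∑ j, a j) := by field_simp
    rw [hc] at hsum
    nlinarith [hsum]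

lemma aux_kl_nonneg {ι : Type*} [Fintype ι] (a b : ι → ℝ) (ha : ∀ i, 0 ≤ a i)
    (hb : ∀ i, 0 ≤ b i) (hab : ∀ i, 0 < a i → 0 < b i) (hs : ∑ i, a i = ∑ i, b i) :
    0 ≤ ∑ i, a i * Real.log (a i / b i) := by
  have := Finset.sum_le_sum (fun i (_ : i ∈ Finset.univ) =>
    aux_gibbs_pt (a i) (b i) (ha i) (hb i) (hab i))
  rw [Finset.sum_sub_distrib, hs] at this
  linarith

lemma aux_kl_dpi {X Y : Type*} [Fintype X] [Fintype Y] (a b : X → ℝ) (W : X → Y → ℝ)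
    (ha : ∀ x, 0 ≤ a x) (hb : ∀ x, 0 ≤ b x) (hab : ∀ x, 0 < a x → 0 < b x)
    (hWnn : ∀ x y, 0 ≤ W x y) (hWsum : ∀ x, ∑ y, W x y = 1)
    (hBy : ∀ y, 0 < ∑ x, b x * W x y) :
    ∑ y, (∑ x, a x * W x y) * Real.log ((∑ x, a x * W x y)/(∑ x, b x * W x y))
      ≤ ∑ x, a x * Real.log (a x / b x) := by
  have hstep : ∀ x, a x * Real.log (a x / b x)
      = ∑ y, (a x * W x y) * Real.log ((a x * W x y)/(b x * W x y)) := by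
    intro x
    have hterm : ∀ y, (a x * W x y) * Real.log ((a x * W x y)/(b x * W x y))
        = W x y * (a x * Real.log (a x / b x)) := by
      intro y
      rcases eq_or_lt_of_le (hWnn x y) with hw | hw
      · rw [← hw]; ring
      · rw [mul_div_mul_right _ _ (ne_of_gt hw)]; ring
    rw [Finset.sum_congr rfl (fun y _ => hterm y), ← Finset.sum_mul, hWsum x, one_mul]
  calc ∑ y, (∑ x, a x * W x y) * Real.log ((∑ x, a x * W x y)/(∑ x, b x * W x y))
      ≤ ∑ y, ∑ x, (a x * W x y) * Real.log ((a x * W x y)/(b x * W x y)) := by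
        apply Finset.sum_le_sum
        intro y _
        exact aux_logsum (fun x => a x * W x y) (fun x => b x * W x y)
          (fun x => mul_nonneg (ha x) (hWnn x y))
          (fun x => mul_nonneg (hb x) (hWnn x y))
          (fun x hx => by
            have hw : 0 < W x y := lt_of_le_of_ne (hWnn x y)
              (fun hc => by rw [← hc, mul_zero] at hx; exact lt_irrefl 0 hx)
            have hax : 0 < a x := lt_of_le_of_ne (ha x)
              (fun hc => by rw [← hc, zero_mul] at hx; exact lt_irrefl 0 hx)
            exact mul_pos (hab x hax) hw)
          (hBy y)
    _ = ∑ x, ∑ y, (a x * W x y) * Real.log ((a x * W x y)/(b x * W x y)) := Finset.sum_comm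
    _ = ∑ x, a x * Real.log (a x / b x) := by
        exact Finset.sum_congr rfl (fun x _ => (hstep x).symm)

lemma aux_term_est (x : ℝ) (hx : |x| ≤ 1/2) :
    |(1+x)*Real.log (1+x) - x - x^2/2| ≤ 4*|x|^3 := by
  have h1 : |(-x)| < 1 := by rw [abs_neg]; linarith
  have h2 := Real.abs_log_sub_add_sum_range_le h1 2
  rw [Finset.sum_range_succ, Finset.sum_range_one] at h2
  have h3 : (1 : ℝ) - (-x) = 1 + x := by ring
  rw [h3] at h2
  -- h2 : |(-x)^1/1 + (-x)^2/2 + log(1+x)| ≤ |-x|^3/(1-|-x|)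
  rw [abs_neg] at h2
  have h4 : |Real.log (1+x) - (x - x^2/2)| ≤ |x|^3/(1-|x|) := by
    have : (-x)^(0+1)/((0:ℕ)+1) + (-x)^(1+1)/((1:ℕ)+1) + Real.log (1+x)
        = Real.log (1+x) - (x - x^2/2) := by push_cast; ring
    rw [this] at h2; exact h2
  have h5 : |x|^3/(1-|x|) ≤ 2*|x|^3 := by
    rw [div_le_iff₀ (by linarith)]
    nlinarith [abs_nonneg x, pow_nonneg (abs_nonneg x) 3]
  have h6 : |Real.log (1+x) - (x - x^2/2)| ≤ 2*|x|^3 := le_trans h4 h5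
  -- now (1+x)log(1+x) - x - x^2/2 = (1+x)(log(1+x)-(x-x^2/2)) + (-x^3/2)
  have h7 : (1+x)*Real.log (1+x) - x - x^2/2
      = (1+x)*(Real.log (1+x) - (x - x^2/2)) + (-(x^3)/2) := by ring
  rw [h7]
  have h8 : |1+x| ≤ 3/2 := by
    have := abs_le.mp hx; rcases this with ⟨hl, hr⟩
    rw [abs_le]; constructor <;> linarith
  calc |(1+x)*(Real.log (1+x) - (x - x^2/2)) + (-(x^3)/2)|
      ≤ |1+x| * |Real.log (1+x) - (x - x^2/2)| + |(-(x^3))/2| := by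
        rw [← abs_mul]
        have := abs_add_le ((1+x)*(Real.log (1+x) - (x - x^2/2))) (-(x^3)/2)
        simpa using this
    _ ≤ (3/2)*(2*|x|^3) + |x|^3/2 := by
        have h9 : |(-(x^3))/2| = |x|^3/2 := by
          rw [abs_div, abs_neg, abs_pow]; norm_num
        rw [h9]
        have := mul_le_mul h8 h6 (abs_nonneg _) (by norm_num)
        linarith
    _ ≤ 4*|x|^3 := by nlinarith [pow_nonneg (abs_nonneg x) 3]

lemma aux_EST {ι : Type*} [Fintype ι] (a b : ι → ℝ) (M : ℝ)
    (ha : ∀ i, 0 ≤ a i) (hsa : ∑ i, a i = 1) (hab : ∑ i, a i * b i = 0)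
    (hM : 1 ≤ M) (hbM : ∀ i, |b i| ≤ M) (ε : ℝ) (hε : |ε| ≤ 1/(2*M)) :
    |(∑ i, a i * (1+ε*b i) * Real.log (1+ε*b i)) - ε^2/2 * ∑ i, a i * (b i)^2|
      ≤ 4*M^3*|ε|^3 := by
  have hM0 : 0 < M := by linarith
  have key : ∀ i, |a i * (1+ε*b i) * Real.log (1+ε*b i)
      - (a i * (ε * b i) + a i * (ε^2/2 * (b i)^2))| ≤ a i * (4*M^3*|ε|^3) := by
    intro i
    have hxb : |ε * b i| ≤ 1/2 := by
      rw [abs_mul]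
      calc |ε| * |b i| ≤ (1/(2*M)) * M := by
            apply mul_le_mul hε (hbM i) (abs_nonneg _) (by positivity)
        _ = 1/2 := by field_simp
    have ht := aux_term_est (ε * b i) hxb
    have heq : a i * (1+ε*b i) * Real.log (1+ε*b i)
        - (a i * (ε * b i) + a i * (ε^2/2 * (b i)^2))
        = a i * ((1+ε*b i)*Real.log (1+ε*b i) - (ε*b i) - (ε*b i)^2/2) := by ring
    rw [heq, abs_mul, abs_of_nonneg (ha i)]
    apply mul_le_mul_of_nonneg_left _ (ha i)
    calc |(1+ε*b i)*Real.log (1+ε*b i) - (ε*b i) - (ε*b i)^2/2|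
        ≤ 4*|ε*b i|^3 := ht
      _ ≤ 4*M^3*|ε|^3 := by
          rw [abs_mul, mul_pow]
          have h1 : |b i|^3 ≤ M^3 := pow_le_pow_left₀ (abs_nonneg _) (hbM i) 3
          nlinarith [pow_nonneg (abs_nonneg ε) 3, pow_nonneg (abs_nonneg (b i)) 3]
  have hsplit : (∑ i, a i * (1+ε*b i) * Real.log (1+ε*b i)) - ε^2/2 * ∑ i, a i * (b i)^2
      = ∑ i, (a i * (1+ε*b i) * Real.log (1+ε*b i)
          - (a i * (ε * b i) + a i * (ε^2/2 * (b i)^2))) := by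
    rw [Finset.sum_sub_distrib, Finset.sum_add_distrib]
    have e1 : ∑ i, a i * (ε * b i) = ε * ∑ i, a i * b i := by
      rw [Finset.mul_sum]; exact Finset.sum_congr rfl (fun i _ => by ring)
    have e2 : ∑ i, a i * (ε^2/2 * (b i)^2) = ε^2/2 * ∑ i, a i * (b i)^2 := by
      rw [Finset.mul_sum]; exact Finset.sum_congr rfl (fun i _ => by ring)
    rw [e1, e2, hab, mul_zero]; ring
  rw [hsplit]
  calc |∑ i, (a i * (1+ε*b i) * Real.log (1+ε*b i)
          - (a i * (ε * b i) + a i * (ε^2/2 * (b i)^2)))|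
      ≤ ∑ i, |a i * (1+ε*b i) * Real.log (1+ε*b i)
          - (a i * (ε * b i) + a i * (ε^2/2 * (b i)^2))| := Finset.abs_sum_le_sum_abs _ _
    _ ≤ ∑ i, a i * (4*M^3*|ε|^3) := Finset.sum_le_sum (fun i _ => key i)
    _ = 4*M^3*|ε|^3 := by rw [← Finset.sum_mul, hsa, one_mul]

lemma aux_mutInfo_eq {A B : Type*} [Fintype A] [Fintype B] (m : A → B → ℝ)
    (hm : ∀ a b, 0 ≤ m a b) :
    mutInfo m = ∑ a, ∑ b, m a b *
      Real.log (m a b / ((∑ b', m a b') * (∑ a', m a' b))) := by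
  have hterm : ∀ a b, m a b * Real.log (m a b / ((∑ b', m a b') * (∑ a', m a' b)))
      = m a b * Real.log (m a b) - m a b * Real.log (∑ b', m a b')
        - m a b * Real.log (∑ a', m a' b) := by
    intro a b
    rcases eq_or_lt_of_le (hm a b) with h | h
    · rw [← h]; ring
    · have hA : 0 < ∑ b', m a b' :=
        lt_of_lt_of_le h (Finset.single_le_sum (fun b' _ => hm a b') (Finset.mem_univ b))
      have hB : 0 < ∑ a', m a' b :=
        lt_of_lt_of_le h (Finset.single_le_sum (fun a' _ => hm a' b) (Finset.mem_univ a))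
      rw [Real.log_div (ne_of_gt h) (by positivity), Real.log_mul (ne_of_gt hA) (ne_of_gt hB)]
      ring
  rw [Finset.sum_congr rfl (fun a _ => Finset.sum_congr rfl (fun b _ => hterm a b))]
  simp only [Finset.sum_sub_distrib]
  have e1 : ∑ a, ∑ b, m a b * Real.log (∑ b', m a b')
      = - entropy (fun a => ∑ b, m a b) := by
    unfold entropy
    rw [← Finset.sum_neg_distrib]
    apply Finset.sum_congr rfl
    intro a _
    rw [← Finset.sum_mul, Real.negMulLog]
    ring
  have e2 : ∑ a, ∑ b, m a b * Real.log (∑ a', m a' b)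
      = - entropy (fun b => ∑ a, m a b) := by
    unfold entropy
    rw [Finset.sum_comm, ← Finset.sum_neg_distrib]
    apply Finset.sum_congr rfl
    intro b _
    rw [← Finset.sum_mul, Real.negMulLog]
    ring
  have e3 : ∑ a, ∑ b, m a b * Real.log (m a b)
      = - entropy (fun z : A × B => m z.1 z.2) := by
    unfold entropy
    rw [Fintype.sum_prod_type, ← Finset.sum_neg_distrib]
    apply Finset.sum_congr rfl
    intro a _
    rw [← Finset.sum_neg_distrib]
    apply Finset.sum_congr rfl
    intro b _
    rw [Real.negMulLog]
    ring
  rw [e1, e2, e3]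
  unfold mutInfo
  ring

lemma aux_mutInfo_nonneg {A B : Type*} [Fintype A] [Fintype B] (m : A → B → ℝ)
    (hm : ∀ a b, 0 ≤ m a b) (hs : ∑ a, ∑ b, m a b = 1) : 0 ≤ mutInfo m := by
  rw [aux_mutInfo_eq m hm]
  have key : ∀ a ∈ (Finset.univ : Finset A),
      (∑ b, m a b) - ∑ b, (∑ b', m a b') * (∑ a', m a' b)
      ≤ ∑ b, m a b * Real.log (m a b / ((∑ b', m a b') * (∑ a', m a' b))) := by
    intro a _
    rw [← Finset.sum_sub_distrib]
    apply Finset.sum_le_sum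
    intro b _
    apply aux_gibbs_pt _ _ (hm a b)
    · exact mul_nonneg (Finset.sum_nonneg fun b' _ => hm a b')
        (Finset.sum_nonneg fun a' _ => hm a' b)
    · intro h
      have hA : 0 < ∑ b', m a b' :=
        lt_of_lt_of_le h (Finset.single_le_sum (fun b' _ => hm a b') (Finset.mem_univ b))
      have hB : 0 < ∑ a', m a' b :=
        lt_of_lt_of_le h (Finset.single_le_sum (fun a' _ => hm a' b) (Finset.mem_univ a))
      positivity
  have hsum := Finset.sum_le_sum key
  rw [Finset.sum_sub_distrib] at hsum
  have h1 : ∑ a, ∑ b, (∑ b', m a b') * (∑ a', m a' b)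
      = (∑ a, ∑ b', m a b') * (∑ b, ∑ a', m a' b) := by
    rw [Finset.sum_mul]
    apply Finset.sum_congr rfl
    intro a _
    rw [Finset.mul_sum]
  have h2 : ∑ b, ∑ a', m a' b = 1 := by rw [Finset.sum_comm]; exact hs
  rw [h1, hs, h2, one_mul] at hsum
  linarith

lemma aux_mutInfo_dpi {U X Y : Type*} [Fintype U] [Fintype X] [Fintype Y]
    (q : U → X → ℝ) (p : X → ℝ) (W : X → Y → ℝ)
    (hq : ∀ u x, 0 ≤ q u x) (hmarg : ∀ x, ∑ u, q u x = p x) (hppos : ∀ x, 0 < p x)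
    (hWnn : ∀ x y, 0 ≤ W x y) (hWsum : ∀ x, ∑ y, W x y = 1)
    (hy : ∀ y, 0 < ∑ x, p x * W x y) :
    mutInfo (fun u y => ∑ x, q u x * W x y) ≤ mutInfo q := by
  have hm' : ∀ u y, 0 ≤ ∑ x, q u x * W x y :=
    fun u y => Finset.sum_nonneg (fun x _ => mul_nonneg (hq u x) (hWnn x y))
  rw [aux_mutInfo_eq q hq, aux_mutInfo_eq _ hm']
  -- simplify marginals
  have hrow : ∀ u, ∑ y, ∑ x, q u x * W x y = ∑ x, q u x := by
    intro u
    rw [Finset.sum_comm]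
    apply Finset.sum_congr rfl
    intro x _
    rw [← Finset.mul_sum, hWsum x, mul_one]
  have hcol : ∀ y, ∑ u, ∑ x, q u x * W x y = ∑ x, p x * W x y := by
    intro y
    rw [Finset.sum_comm]
    apply Finset.sum_congr rfl
    intro x _
    rw [← Finset.sum_mul, hmarg x]
  apply Finset.sum_le_sum
  intro u _
  rcases eq_or_lt_of_le (Finset.sum_nonneg (fun x (_ : x ∈ Finset.univ) => hq u x)) with h | h
  · -- qU u = 0 : all q u x = 0, both sides vanish
    have hz := (Finset.sum_eq_zero_iff_of_nonneg (fun x (_ : x ∈ Finset.univ) => hq u x)).mp h.symm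
    have hL : ∀ y, (∑ x, q u x * W x y) = 0 := by
      intro y
      apply Finset.sum_eq_zero
      intro x hx
      rw [hz x hx, zero_mul]
    calc ∑ y, (∑ x, q u x * W x y) * Real.log ((∑ x, q u x * W x y) /
          ((∑ y', ∑ x, q u x * W x y') * (∑ u', ∑ x, q u' x * W x y)))
        = 0 := Finset.sum_eq_zero (fun y _ => by rw [hL y, zero_mul])
      _ ≤ _ := Finset.sum_nonneg (fun x hx => by
          rw [hz x hx, zero_mul])
      -- note : both sides zero
  · have hkl := aux_kl_dpi (q u) (fun x => (∑ x', q u x') * p x) W (hq u)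
      (fun x => mul_nonneg h.le (hppos x).le)
      (fun x _ => mul_pos h (hppos x)) hWnn hWsum
      (fun y => by
        have : ∑ x, ((∑ x', q u x') * p x) * W x y = (∑ x', q u x') * ∑ x, p x * W x y := by
          rw [Finset.mul_sum]
          exact Finset.sum_congr rfl (fun x _ => by ring)
        rw [this]
        exact mul_pos h (hy y))
    have hden : ∀ y, ∑ x, ((∑ x', q u x') * p x) * W x y
        = (∑ y', ∑ x, q u x * W x y') * (∑ u', ∑ x, q u' x * W x y) := by
      intro y
      rw [hrow u, hcol y, Finset.mul_sum]
      exact Finset.sum_congr rfl (fun x _ => by ring)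
    calc ∑ y, (∑ x, q u x * W x y) * Real.log ((∑ x, q u x * W x y) /
          ((∑ y', ∑ x, q u x * W x y') * (∑ u', ∑ x, q u' x * W x y)))
        = ∑ y, (∑ x, q u x * W x y) * Real.log ((∑ x, q u x * W x y) /
          (∑ x, ((∑ x', q u x') * p x) * W x y)) := by
          exact Finset.sum_congr rfl (fun y _ => by rw [hden y])
      _ ≤ ∑ x, q u x * Real.log (q u x / ((∑ x', q u x') * p x)) := hkl
      _ = ∑ x, q u x * Real.log (q u x / ((∑ x', q u x') * (∑ u', q u' x))) := by
          exact Finset.sum_congr rfl (fun x _ => by rw [hmarg x])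

noncomputable def margY {X Y : Type*} [Fintype X] [Fintype Y] (p : X → ℝ) (W : X → Y → ℝ)
    (y : Y) : ℝ := ∑ x, p x * W x y

noncomputable def condExp {X Y : Type*} [Fintype X] [Fintype Y] (p : X → ℝ) (W : X → Y → ℝ)
    (f : X → ℝ) (y : Y) : ℝ := (∑ x, p x * W x y * f x) / margY p W y

section Facts
variable {X Y : Type*} [Fintype X] [Fintype Y] (p : X → ℝ) (W : X → Y → ℝ) (f : X → ℝ)

lemma margY_sum (hWsum : ∀ x, ∑ y, W x y = 1) (hpsum : ∑ x, p x = 1) :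
    ∑ y, margY p W y = 1 := by
  unfold margY
  rw [Finset.sum_comm]
  rw [Finset.sum_congr rfl (fun x (_ : x ∈ Finset.univ) => by
    rw [← Finset.mul_sum, hWsum x, mul_one])]
  exact hpsum

lemma condExp_mul (hy : ∀ y, 0 < ∑ x, p x * W x y) (y : Y) :
    margY p W y * condExp p W f y = ∑ x, p x * W x y * f x := by
  unfold condExp margY
  field_simp [(hy y).ne']

lemma condExp_sum (hy : ∀ y, 0 < ∑ x, p x * W x y) (hWsum : ∀ x, ∑ y, W x y = 1)
    (hpf : ∑ x, p x * f x = 0) :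
    ∑ y, margY p W y * condExp p W f y = 0 := by
  rw [Finset.sum_congr rfl (fun y (_ : y ∈ Finset.univ) => condExp_mul p W f hy y)]
  rw [Finset.sum_comm]
  rw [Finset.sum_congr rfl (fun x (_ : x ∈ Finset.univ) => by
    rw [Finset.sum_congr rfl (fun y (_ : y ∈ Finset.univ) => by
      show p x * W x y * f x = (p x * f x) * W x y
      ring), ← Finset.mul_sum, hWsum x, mul_one])]
  exact hpf

lemma condExp_bound (hy : ∀ y, 0 < ∑ x, p x * W x y) (hpos : ∀ x, 0 < p x)
    (hWnn : ∀ x y, 0 ≤ W x y) (y : Y) :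
    |condExp p W f y| ≤ 1 + ∑ x, |f x| := by
  unfold condExp
  rw [abs_div, abs_of_pos (show 0 < margY p W y from hy y)]
  rw [div_le_iff₀ (show 0 < margY p W y from hy y)]
  calc |∑ x, p x * W x y * f x| ≤ ∑ x, |p x * W x y * f x| := Finset.abs_sum_le_sum_abs _ _
    _ ≤ ∑ x, margY p W y * |f x| := by
        apply Finset.sum_le_sum
        intro x _
        rw [abs_mul, abs_of_nonneg (mul_nonneg (hpos x).le (hWnn x y))]
        apply mul_le_mul_of_nonneg_right _ (abs_nonneg _)
        exact Finset.single_le_sum (fun x' (_ : x' ∈ Finset.univ) =>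
          mul_nonneg (hpos x').le (hWnn x' y)) (Finset.mem_univ x)
    _ = margY p W y * ∑ x, |f x| := by rw [Finset.mul_sum]
    _ ≤ (1 + ∑ x, |f x|) * margY p W y := by
        have h1 : 0 ≤ ∑ x, |f x| := Finset.sum_nonneg (fun x _ => abs_nonneg _)
        nlinarith [show (0:ℝ) < margY p W y from hy y]

lemma B0_le_one (hy : ∀ y, 0 < ∑ x, p x * W x y) (hpos : ∀ x, 0 < p x)
    (hWnn : ∀ x y, 0 ≤ W x y) (hWsum : ∀ x, ∑ y, W x y = 1)
    (hpf2 : ∑ x, p x * (f x)^2 = 1) :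
    ∑ y, margY p W y * (condExp p W f y)^2 ≤ 1 := by
  have key : ∀ y, margY p W y * (condExp p W f y)^2 ≤ ∑ x, p x * W x y * (f x)^2 := by
    intro y
    have hcs := Finset.sum_mul_sq_le_sq_mul_sq Finset.univ
      (fun x => Real.sqrt (p x * W x y)) (fun x => Real.sqrt (p x * W x y) * f x)
    have e1 : ∀ x, Real.sqrt (p x * W x y) * (Real.sqrt (p x * W x y) * f x)
        = p x * W x y * f x := by
      intro x
      rw [← mul_assoc, Real.mul_self_sqrt (mul_nonneg (hpos x).le (hWnn x y))]
    have e2 : ∀ x, Real.sqrt (p x * W x y) ^ 2 = p x * W x y :=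
      fun x => Real.sq_sqrt (mul_nonneg (hpos x).le (hWnn x y))
    have e3 : ∀ x, (Real.sqrt (p x * W x y) * f x) ^ 2 = p x * W x y * (f x)^2 := by
      intro x
      rw [mul_pow, e2 x]
    rw [Finset.sum_congr rfl (fun x _ => e1 x), Finset.sum_congr rfl (fun x _ => e2 x),
      Finset.sum_congr rfl (fun x _ => e3 x)] at hcs
    -- hcs : (∑ pWf)^2 ≤ margY * ∑ pWf²
    have hm := condExp_mul p W f hy y
    have hym := hy y
    have hyne : margY p W y ≠ 0 := ne_of_gt hym
    have : margY p W y * (condExp p W f y)^2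
        = (∑ x, p x * W x y * f x)^2 / margY p W y := by
      rw [← hm]; field_simp
    rw [this, div_le_iff₀ (show 0 < margY p W y from hym)]
    calc (∑ x, p x * W x y * f x)^2 ≤ margY p W y * ∑ x, p x * W x y * (f x)^2 := hcs
      _ = (∑ x, p x * W x y * (f x)^2) * margY p W y := mul_comm _ _
  calc ∑ y, margY p W y * (condExp p W f y)^2 ≤ ∑ y, ∑ x, p x * W x y * (f x)^2 :=
        Finset.sum_le_sum (fun y _ => key y)
    _ = ∑ x, ∑ y, p x * W x y * (f x)^2 := Finset.sum_comm
    _ = ∑ x, p x * (f x)^2 := by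
        apply Finset.sum_congr rfl
        intro x _
        rw [Finset.sum_congr rfl (fun y (_ : y ∈ Finset.univ) => by
          show p x * W x y * (f x)^2 = (p x * (f x)^2) * W x y
          ring), ← Finset.mul_sum, hWsum x, mul_one]
    _ = 1 := hpf2

lemma B0_nonneg (hy : ∀ y, 0 < ∑ x, p x * W x y) :
    0 ≤ ∑ y, margY p W y * (condExp p W f y)^2 :=
  Finset.sum_nonneg (fun y _ => mul_nonneg (hy y).le (sq_nonneg _))

lemma image_marg (ε : ℝ) (y : Y) (hy : ∀ y, 0 < ∑ x, p x * W x y) :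
    ∑ x, (p x * (1 + ε * f x)) * W x y = margY p W y * (1 + ε * condExp p W f y) := by
  have e1 : ∀ x, (p x * (1 + ε * f x)) * W x y = p x * W x y + ε * (p x * W x y * f x) := by
    intro x; ring
  rw [Finset.sum_congr rfl (fun x _ => e1 x), Finset.sum_add_distrib, ← Finset.mul_sum,
    ← condExp_mul p W f hy y]
  show margY p W y + ε * (margY p W y * condExp p W f y) = _
  ring

end Facts


lemma aux_ratio_bound (B0 δ t E KX KY : ℝ) (hδ : 0 < δ) (hB0nn : 0 ≤ B0) (hB01 : B0 ≤ 1)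
    (ht : 0 < t) (hE : 0 ≤ E) (hE1 : E ≤ δ/8) (hE2 : E ≤ 1/4)
    (hKY0 : 0 ≤ KY) (hKY : t*(B0/2 - E) ≤ KY)
    (hKX1 : KX ≤ t*(1/2 + E)) (hKX0 : t*(1/2 - E) ≤ KX) :
    0 < KX ∧ B0 - δ ≤ KY / KX := by
  have hKXpos : 0 < KX := lt_of_lt_of_le (by nlinarith) hKX0
  refine ⟨hKXpos, ?_⟩
  rcases le_or_gt B0 δ with h | h
  · calc B0 - δ ≤ 0 := by linarith
      _ ≤ KY / KX := div_nonneg hKY0 hKXpos.le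
  · rw [le_div_iff₀ hKXpos]
    have h2 : (B0 - δ) * KX ≤ (B0 - δ) * (t*(1/2 + E)) :=
      mul_le_mul_of_nonneg_left hKX1 (by linarith)
    have h3 : (B0 - δ) * (t*(1/2 + E)) ≤ t*(B0/2 - E) := by nlinarith
    linarith

/-- Packaged choice of ε together with all Taylor estimates needed. -/
lemma aux_eps {X Y : Type*} [Fintype X] [Fintype Y] (p : X → ℝ) (W : X → Y → ℝ) (f : X → ℝ)
    (hpsum : ∑ x, p x = 1) (hpos : ∀ x, 0 < p x)
    (hWnn : ∀ x y, 0 ≤ W x y) (hWsum : ∀ x, ∑ y, W x y = 1)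
    (hy : ∀ y, 0 < ∑ x, p x * W x y)
    (hpf : ∑ x, p x * f x = 0) (hpf2 : ∑ x, p x * (f x)^2 = 1)
    (δ : ℝ) (hδ : 0 < δ) :
    ∃ ε E : ℝ, 0 < ε ∧ 0 ≤ E ∧ E ≤ δ/8 ∧ E ≤ 1/4 ∧
      (∀ x, |ε * f x| ≤ 1/2) ∧ (∀ y, |ε * condExp p W f y| ≤ 1/2) ∧
      |(∑ x, p x * (1 + ε * f x) * Real.log (1 + ε * f x)) - ε^2/2 * 1| ≤ E * ε^2 ∧
      |(∑ x, p x * (1 + (-ε) * f x) * Real.log (1 + (-ε) * f x)) - ε^2/2 * 1| ≤ E * ε^2 ∧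
      |(∑ y, margY p W y * (1 + ε * condExp p W f y) *
          Real.log (1 + ε * condExp p W f y))
        - ε^2/2 * (∑ y, margY p W y * (condExp p W f y)^2)| ≤ E * ε^2 ∧
      |(∑ y, margY p W y * (1 + (-ε) * condExp p W f y) *
          Real.log (1 + (-ε) * condExp p W f y))
        - ε^2/2 * (∑ y, margY p W y * (condExp p W f y)^2)| ≤ E * ε^2 := by
  set M : ℝ := 1 + ∑ x, |f x| with hM
  have hM1 : 1 ≤ M := by
    have : 0 ≤ ∑ x, |f x| := Finset.sum_nonneg (fun x _ => abs_nonneg _)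
    linarith
  have hM0 : 0 < M := by linarith
  have hfM : ∀ x, |f x| ≤ M := by
    intro x
    have := Finset.single_le_sum (fun x' (_ : x' ∈ Finset.univ) => abs_nonneg (f x'))
      (Finset.mem_univ x)
    rw [hM]; linarith
  have hctM : ∀ y, |condExp p W f y| ≤ M := fun y => condExp_bound p W f hy hpos hWnn y
  set K : ℝ := 4*M^3 with hK
  have hK0 : 0 < K := by positivity
  set ε : ℝ := min (δ/(8*K)) (1/(4*K)) with hε
  have hε0 : 0 < ε := lt_min (by positivity) (by positivity)
  have hεK1 : K*ε ≤ δ/8 := by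
    have := min_le_left (δ/(8*K)) (1/(4*K))
    rw [← hε] at this
    calc K*ε ≤ K*(δ/(8*K)) := mul_le_mul_of_nonneg_left this hK0.le
      _ = δ/8 := by field_simp
  have hεK2 : K*ε ≤ 1/4 := by
    have := min_le_right (δ/(8*K)) (1/(4*K))
    rw [← hε] at this
    calc K*ε ≤ K*(1/(4*K)) := mul_le_mul_of_nonneg_left this hK0.le
      _ = 1/4 := by field_simp
  have hεM : |ε| ≤ 1/(2*M) := by
    rw [abs_of_pos hε0]
    have h1 : ε ≤ 1/(4*K) := min_le_right _ _
    rw [hK] at h1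
    rw [le_div_iff₀ (show (0:ℝ) < 4*(4*M^3) by positivity)] at h1
    rw [le_div_iff₀ (show (0:ℝ) < 2*M by positivity)]
    -- h1 : ε * (4*(4*M^3)) ≤ 1 ; goal : ε * (2*M) ≤ 1
    nlinarith [hε0.le, hM1, sq_nonneg M, sq_nonneg (M-1), mul_nonneg hε0.le (sq_nonneg M)]
  have hhalf : ∀ c : ℝ, |c| ≤ M → |ε * c| ≤ 1/2 := by
    intro c hc
    rw [abs_mul]
    calc |ε| * |c| ≤ (1/(2*M)) * M :=
          mul_le_mul hεM hc (abs_nonneg _) (by positivity)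
      _ = 1/2 := by field_simp
  have habs3 : K * |ε|^3 ≤ (K*ε) * ε^2 := by
    rw [abs_of_pos hε0]
    nlinarith [hε0]
  have hmargnn : ∀ y, 0 ≤ margY p W y := fun y => (hy y).le
  have hmargsum : ∑ y, margY p W y = 1 := margY_sum p W hWsum hpsum
  have hctsum : ∑ y, margY p W y * condExp p W f y = 0 := condExp_sum p W f hy hWsum hpf
  refine ⟨ε, K*ε, hε0, by positivity, hεK1, hεK2, fun x => hhalf (f x) (hfM x),
    fun y => hhalf (condExp p W f y) (hctM y), ?_, ?_, ?_, ?_⟩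
  · have := aux_EST p f M (fun x => (hpos x).le) hpsum hpf hM1 hfM ε hεM
    rw [hpf2] at this
    calc |(∑ x, p x * (1 + ε * f x) * Real.log (1 + ε * f x)) - ε^2/2 * 1|
        ≤ 4*M^3*|ε|^3 := this
      _ ≤ K*ε*ε^2 := by rw [← hK] at *; exact habs3
  · have := aux_EST p f M (fun x => (hpos x).le) hpsum hpf hM1 hfM (-ε)
      (by rw [abs_neg]; exact hεM)
    rw [hpf2] at this
    rw [abs_neg] at this
    have he : (-ε)^2 = ε^2 := by ring
    rw [he] at this
    calc _ ≤ 4*M^3*|ε|^3 := this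
      _ ≤ K*ε*ε^2 := by rw [← hK] at *; exact habs3
  · have := aux_EST (margY p W) (condExp p W f) M hmargnn hmargsum hctsum hM1 hctM ε hεM
    calc _ ≤ 4*M^3*|ε|^3 := this
      _ ≤ K*ε*ε^2 := by rw [← hK] at *; exact habs3
  · have := aux_EST (margY p W) (condExp p W f) M hmargnn hmargsum hctsum hM1 hctM (-ε)
      (by rw [abs_neg]; exact hεM)
    rw [abs_neg] at this
    have he : (-ε)^2 = ε^2 := by ring
    rw [he] at this
    calc _ ≤ 4*M^3*|ε|^3 := this
      _ ≤ K*ε*ε^2 := by rw [← hK] at *; exact habs3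


lemma aux_mem_sStar {X Y : Type*} [Fintype X] [Fintype Y] (p : X → ℝ) (W : X → Y → ℝ)
    (f : X → ℝ)
    (hpsum : ∑ x, p x = 1) (hpos : ∀ x, 0 < p x)
    (hWnn : ∀ x y, 0 ≤ W x y) (hWsum : ∀ x, ∑ y, W x y = 1)
    (hy : ∀ y, 0 < ∑ x, p x * W x y)
    (hpf : ∑ x, p x * f x = 0) (hpf2 : ∑ x, p x * (f x)^2 = 1)
    (δ : ℝ) (hδ : 0 < δ) :
    ∃ c ∈ {c : ℝ | ∃ r : X → ℝ, IsPMF r ∧ r ≠ p ∧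
      c = KL (fun y => ∑ x, r x * W x y) (fun y => ∑ x, p x * W x y) / KL r p},
      (∑ y, margY p W y * (condExp p W f y)^2) - δ ≤ c := by
  obtain ⟨ε, E, hε0, hE0, hE1, hE2, hf2, hct2, hA, hA', hB, hB'⟩ :=
    aux_eps p W f hpsum hpos hWnn hWsum hy hpf hpf2 δ hδ
  have hεt : (0:ℝ) < ε^2 := by positivity
  -- the perturbed distribution
  have hr_nn : ∀ x, 0 ≤ p x * (1 + ε * f x) := by
    intro x
    have := abs_le.mp (hf2 x)
    nlinarith [hpos x]
  have hr_sum : ∑ x, p x * (1 + ε * f x) = 1 := by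
    have e1 : ∀ x, p x * (1 + ε * f x) = p x + ε * (p x * f x) := fun x => by ring
    rw [Finset.sum_congr rfl (fun x _ => e1 x), Finset.sum_add_distrib, ← Finset.mul_sum,
      hpf, hpsum, mul_zero, add_zero]
  have hex : ∃ x, f x ≠ 0 := by
    by_contra hc
    push_neg at hc
    have : ∑ x, p x * (f x)^2 = 0 :=
      Finset.sum_eq_zero (fun x _ => by rw [hc x]; ring)
    rw [this] at hpf2
    norm_num at hpf2
  obtain ⟨x0, hx0⟩ := hex
  have hr_ne : (fun x => p x * (1 + ε * f x)) ≠ p := by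
    intro heq
    have h1 : p x0 * (1 + ε * f x0) = p x0 := congrFun heq x0
    have h2 : 1 + ε * f x0 = 1 := mul_left_cancel₀ (hpos x0).ne' (by rw [h1, mul_one])
    have h3 : ε * f x0 = 0 := by linarith
    rcases mul_eq_zero.mp h3 with h | h
    · exact hε0.ne' h
    · exact hx0 h
  -- KL denominator
  have hKX : KL (fun x => p x * (1 + ε * f x)) p
      = ∑ x, p x * (1 + ε * f x) * Real.log (1 + ε * f x) := by
    show ∑ x, (p x * (1 + ε * f x)) * Real.log ((p x * (1 + ε * f x)) / p x) = _
    apply Finset.sum_congr rfl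
    intro x _
    have : p x * (1 + ε * f x) / p x = 1 + ε * f x := by
      field_simp [(hpos x).ne']
    rw [this]
  -- KL numerator
  have hKY : KL (fun y => ∑ x, (p x * (1 + ε * f x)) * W x y) (fun y => ∑ x, p x * W x y)
      = ∑ y, margY p W y * (1 + ε * condExp p W f y)
          * Real.log (1 + ε * condExp p W f y) := by
    show ∑ y, (∑ x, (p x * (1 + ε * f x)) * W x y) *
        Real.log ((∑ x, (p x * (1 + ε * f x)) * W x y) / (∑ x, p x * W x y)) = _
    apply Finset.sum_congr rfl
    intro y _
    rw [image_marg p W f ε y hy]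
    have hmr : (∑ x, p x * W x y) = margY p W y := rfl
    rw [hmr]
    have : margY p W y * (1 + ε * condExp p W f y) / margY p W y
        = 1 + ε * condExp p W f y := by
      field_simp [show margY p W y ≠ 0 from (hy y).ne']
    rw [this]
  have hKY0 : 0 ≤ KL (fun y => ∑ x, (p x * (1 + ε * f x)) * W x y)
      (fun y => ∑ x, p x * W x y) := by
    apply aux_kl_nonneg
    · exact fun y => Finset.sum_nonneg (fun x _ => mul_nonneg (hr_nn x) (hWnn x y))
    · exact fun y => (hy y).le
    · exact fun y _ => hy y
    · have e1 : ∑ y, ∑ x, (p x * (1 + ε * f x)) * W x y = 1 := by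
        rw [Finset.sum_comm]
        rw [Finset.sum_congr rfl (fun x (_ : x ∈ Finset.univ) => by
          rw [← Finset.mul_sum, hWsum x, mul_one])]
        exact hr_sum
      have e2 : ∑ y, ∑ x, p x * W x y = 1 := margY_sum p W hWsum hpsum
      rw [e1, e2]
  obtain ⟨hKXpos, hfinal⟩ := aux_ratio_bound
    (∑ y, margY p W y * (condExp p W f y)^2) δ (ε^2) E
    (KL (fun x => p x * (1 + ε * f x)) p)
    (KL (fun y => ∑ x, (p x * (1 + ε * f x)) * W x y) (fun y => ∑ x, p x * W x y))
    hδ (B0_nonneg p W f hy) (B0_le_one p W f hy hpos hWnn hWsum hpf2) hεt hE0 hE1 hE2 hKY0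
    (by rw [hKY]; have := abs_le.mp hB; nlinarith [this.1])
    (by rw [hKX]; have := abs_le.mp hA; nlinarith [this.2])
    (by rw [hKX]; have := abs_le.mp hA; nlinarith [this.1])
  refine ⟨_, ⟨fun x => p x * (1 + ε * f x), ⟨hr_nn, hr_sum⟩, hr_ne, rfl⟩, hfinal⟩


set_option maxHeartbeats 1000000 in
lemma aux_mem_S1 {X Y : Type*} [Fintype X] [Fintype Y] (p : X → ℝ) (W : X → Y → ℝ)
    (f : X → ℝ)
    (hpsum : ∑ x, p x = 1) (hpos : ∀ x, 0 < p x)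
    (hWnn : ∀ x y, 0 ≤ W x y) (hWsum : ∀ x, ∑ y, W x y = 1)
    (hy : ∀ y, 0 < ∑ x, p x * W x y)
    (hpf : ∑ x, p x * f x = 0) (hpf2 : ∑ x, p x * (f x)^2 = 1)
    (δ : ℝ) (hδ : 0 < δ) :
    ∃ c ∈ {c : ℝ | ∃ n : ℕ, ∃ q : Fin n → X → ℝ,
        (∀ u x, 0 ≤ q u x) ∧ (∀ x, ∑ u, q u x = p x) ∧
        0 < mutInfo q ∧
        c = mutInfo (fun u y => ∑ x, q u x * W x y) / mutInfo q},
      (∑ y, margY p W y * (condExp p W f y)^2) - δ ≤ c := by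
  obtain ⟨ε, E, hε0, hE0, hE1, hE2, hf2, hct2, hA, hA', hB, hB'⟩ :=
    aux_eps p W f hpsum hpos hWnn hWsum hy hpf hpf2 δ hδ
  have hεt : (0:ℝ) < ε^2 := by positivity
  set q : Fin 2 → X → ℝ := fun u x =>
    if u = 0 then p x * (1 + ε * f x) / 2 else p x * (1 + (-ε) * f x) / 2 with hqdef
  have hq0 : ∀ x, q 0 x = p x * (1 + ε * f x) / 2 := fun x => by simp [hqdef]
  have hq1 : ∀ x, q 1 x = p x * (1 + (-ε) * f x) / 2 := fun x => by simp [hqdef]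
  have hq_nn : ∀ u x, 0 ≤ q u x := by
    intro u x
    have h1 := abs_le.mp (hf2 x)
    have hp := hpos x
    by_cases hu : u = 0
    · rw [hu, hq0 x]; nlinarith
    · have hu1 : u = 1 := by omega
      rw [hu1, hq1 x]; nlinarith
  have hmargq : ∀ x, ∑ u, q u x = p x := by
    intro x
    rw [Fin.sum_univ_two, hq0 x, hq1 x]
    ring
  have hbranch : ∀ σ : ℝ, ∑ x, p x * (1 + σ * f x) / 2 = 1/2 := by
    intro σ
    have e1 : ∀ x, p x * (1 + σ * f x) / 2 = (p x + σ * (p x * f x))/2 := fun x => by ring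
    rw [Finset.sum_congr rfl (fun x _ => e1 x)]
    have e2 : ∑ x, (p x + σ * (p x * f x))/2 = ((∑ x, p x) + σ * ∑ x, p x * f x)/2 := by
      rw [← Finset.sum_div, Finset.sum_add_distrib, ← Finset.mul_sum]
    rw [e2, hpsum, hpf, mul_zero, add_zero]
  have hqU0 : ∑ x, q 0 x = 1/2 := by
    rw [Finset.sum_congr rfl (fun x _ => hq0 x)]
    exact hbranch ε
  have hqU1 : ∑ x, q 1 x = 1/2 := by
    rw [Finset.sum_congr rfl (fun x _ => hq1 x)]
    exact hbranch (-ε)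
  -- mutual information I(U;X)
  have hIUX : mutInfo q
      = 1/2 * (∑ x, p x * (1 + ε * f x) * Real.log (1 + ε * f x))
        + 1/2 * (∑ x, p x * (1 + (-ε) * f x) * Real.log (1 + (-ε) * f x)) := by
    rw [aux_mutInfo_eq q hq_nn, Fin.sum_univ_two]
    have h0 : ∑ x, q 0 x * Real.log (q 0 x / ((∑ x', q 0 x') * (∑ u', q u' x)))
        = 1/2 * ∑ x, p x * (1 + ε * f x) * Real.log (1 + ε * f x) := by
      rw [hqU0, Finset.mul_sum]
      apply Finset.sum_congr rfl
      intro x _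
      rw [hmargq x, hq0 x]
      have harg : (p x * (1 + ε * f x) / 2) / (1/2 * p x) = 1 + ε * f x := by
        field_simp [(hpos x).ne']
      rw [harg]
      ring
    have h1 : ∑ x, q 1 x * Real.log (q 1 x / ((∑ x', q 1 x') * (∑ u', q u' x)))
        = 1/2 * ∑ x, p x * (1 + (-ε) * f x) * Real.log (1 + (-ε) * f x) := by
      rw [hqU1, Finset.mul_sum]
      apply Finset.sum_congr rfl
      intro x _
      rw [hmargq x, hq1 x]
      have harg : (p x * (1 + (-ε) * f x) / 2) / (1/2 * p x) = 1 + (-ε) * f x := by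
        field_simp [(hpos x).ne']
      rw [harg]
      ring
    rw [h0, h1]
  -- image joint distribution facts
  have h0y : ∀ y, ∑ x, q 0 x * W x y
      = 1/2 * (margY p W y * (1 + ε * condExp p W f y)) := by
    intro y
    have e1 : ∀ x, q 0 x * W x y = ((p x * (1 + ε * f x)) * W x y) / 2 := by
      intro x
      rw [hq0 x]
      ring
    rw [Finset.sum_congr rfl (fun x _ => e1 x), ← Finset.sum_div,
      image_marg p W f ε y hy]
    ring
  have h1y : ∀ y, ∑ x, q 1 x * W x y
      = 1/2 * (margY p W y * (1 + (-ε) * condExp p W f y)) := by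
    intro y
    have e1 : ∀ x, q 1 x * W x y = ((p x * (1 + (-ε) * f x)) * W x y) / 2 := by
      intro x
      rw [hq1 x]
      ring
    rw [Finset.sum_congr rfl (fun x _ => e1 x), ← Finset.sum_div,
      image_marg p W f (-ε) y hy]
    ring
  have hm'_nn : ∀ u y, 0 ≤ ∑ x, q u x * W x y :=
    fun u y => Finset.sum_nonneg (fun x _ => mul_nonneg (hq_nn u x) (hWnn x y))
  have hmargsum : ∑ y, margY p W y = 1 := margY_sum p W hWsum hpsum
  have hctsum : ∑ y, margY p W y * condExp p W f y = 0 := condExp_sum p W f hy hWsum hpf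
  have hqU0' : ∑ y, ∑ x, q 0 x * W x y = 1/2 := by
    rw [Finset.sum_congr rfl (fun y _ => h0y y)]
    have e1 : ∀ y : Y, 1/2 * (margY p W y * (1 + ε * condExp p W f y))
        = (margY p W y + ε * (margY p W y * condExp p W f y))/2 := fun y => by ring
    rw [Finset.sum_congr rfl (fun y _ => e1 y), ← Finset.sum_div,
      Finset.sum_add_distrib, ← Finset.mul_sum, hmargsum, hctsum, mul_zero, add_zero]
  have hqU1' : ∑ y, ∑ x, q 1 x * W x y = 1/2 := by
    rw [Finset.sum_congr rfl (fun y _ => h1y y)]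
    have e1 : ∀ y : Y, 1/2 * (margY p W y * (1 + (-ε) * condExp p W f y))
        = (margY p W y + (-ε) * (margY p W y * condExp p W f y))/2 := fun y => by ring
    rw [Finset.sum_congr rfl (fun y _ => e1 y), ← Finset.sum_div,
      Finset.sum_add_distrib, ← Finset.mul_sum, hmargsum, hctsum, mul_zero, add_zero]
  have hcol' : ∀ y, ∑ u, ∑ x, q u x * W x y = margY p W y := by
    intro y
    rw [Fin.sum_univ_two, h0y y, h1y y]
    ring
  -- mutual information I(U;Y)
  have hIUY : mutInfo (fun u y => ∑ x, q u x * W x y)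
      = 1/2 * (∑ y, margY p W y * (1 + ε * condExp p W f y)
            * Real.log (1 + ε * condExp p W f y))
        + 1/2 * (∑ y, margY p W y * (1 + (-ε) * condExp p W f y)
            * Real.log (1 + (-ε) * condExp p W f y)) := by
    rw [aux_mutInfo_eq _ hm'_nn, Fin.sum_univ_two]
    have h0 : ∑ y, (∑ x, q 0 x * W x y) * Real.log ((∑ x, q 0 x * W x y) /
          ((∑ y', ∑ x, q 0 x * W x y') * (∑ u', ∑ x, q u' x * W x y)))
        = 1/2 * ∑ y, margY p W y * (1 + ε * condExp p W f y)
            * Real.log (1 + ε * condExp p W f y) := by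
      rw [hqU0', Finset.mul_sum]
      apply Finset.sum_congr rfl
      intro y _
      rw [hcol' y, h0y y]
      have harg : (1/2 * (margY p W y * (1 + ε * condExp p W f y))) / (1/2 * margY p W y)
          = 1 + ε * condExp p W f y := by
        field_simp [show margY p W y ≠ 0 from (hy y).ne']
      rw [harg]
      ring
    have h1 : ∑ y, (∑ x, q 1 x * W x y) * Real.log ((∑ x, q 1 x * W x y) /
          ((∑ y', ∑ x, q 1 x * W x y') * (∑ u', ∑ x, q u' x * W x y)))
        = 1/2 * ∑ y, margY p W y * (1 + (-ε) * condExp p W f y)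
            * Real.log (1 + (-ε) * condExp p W f y) := by
      rw [hqU1', Finset.mul_sum]
      apply Finset.sum_congr rfl
      intro y _
      rw [hcol' y, h1y y]
      have harg : (1/2 * (margY p W y * (1 + (-ε) * condExp p W f y))) / (1/2 * margY p W y)
          = 1 + (-ε) * condExp p W f y := by
        field_simp [show margY p W y ≠ 0 from (hy y).ne']
      rw [harg]
      ring
    rw [h0, h1]
  have hIUY0 : 0 ≤ mutInfo (fun u y => ∑ x, q u x * W x y) := by
    apply aux_mutInfo_nonneg _ hm'_nn
    rw [Fin.sum_univ_two, hqU0', hqU1']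
    norm_num
  obtain ⟨hKXpos, hfinal⟩ := aux_ratio_bound
    (∑ y, margY p W y * (condExp p W f y)^2) δ (ε^2) E
    (mutInfo q) (mutInfo (fun u y => ∑ x, q u x * W x y))
    hδ (B0_nonneg p W f hy) (B0_le_one p W f hy hpos hWnn hWsum hpf2) hεt hE0 hE1 hE2 hIUY0
    (by
      rw [hIUY]
      have hb := abs_le.mp hB
      have hb' := abs_le.mp hB'
      nlinarith [hb.1, hb'.1])
    (by
      rw [hIUX]
      have ha := abs_le.mp hA
      have ha' := abs_le.mp hA'
      nlinarith [ha.2, ha'.2])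
    (by
      rw [hIUX]
      have ha := abs_le.mp hA
      have ha' := abs_le.mp hA'
      nlinarith [ha.1, ha'.1])
  exact ⟨_, ⟨2, q, hq_nn, hmargq, hKXpos, rfl⟩, hfinal⟩

lemma aux_sq_sSup (C : Set ℝ) (hsym : ∀ c ∈ C, -c ∈ C) (B : ℝ) (hB : 0 ≤ B)
    (h : ∀ c ∈ C, c^2 ≤ B) : (sSup C)^2 ≤ B := by
  rcases C.eq_empty_or_nonempty with h0 | ⟨c0, hc0⟩
  · rw [h0, Real.sSup_empty]
    simpa using hB
  · have hub : ∀ c ∈ C, c ≤ Real.sqrt B := by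
      intro c hc
      have h1 : |c| ≤ Real.sqrt B := Real.abs_le_sqrt (h c hc)
      exact le_trans (le_abs_self c) h1
    have hbdd : BddAbove C := ⟨Real.sqrt B, fun c hc => hub c hc⟩
    have hup : sSup C ≤ Real.sqrt B := Real.sSup_le hub (Real.sqrt_nonneg B)
    have hlow : -Real.sqrt B ≤ sSup C := by
      have h1 : |c0| ≤ Real.sqrt B := Real.abs_le_sqrt (h c0 hc0)
      have h2 := le_csSup hbdd hc0
      have := abs_le.mp h1
      linarith [this.1]
    nlinarith [Real.sq_sqrt hB]

lemma sum_image_total {X Y : Type*} [Fintype X] [Fintype Y] (r : X → ℝ) (W : X → Y → ℝ)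
    (hWsum : ∀ x, ∑ y, W x y = 1) : ∑ y, ∑ x, r x * W x y = ∑ x, r x := by
  rw [Finset.sum_comm]
  apply Finset.sum_congr rfl
  intro x _
  rw [← Finset.mul_sum, hWsum x, mul_one]

end AuxLemmas

/-- `ρ_m²(X;Y)` is at most the supremum of `I(U;Y)/I(U;X)` over Markov
chains `U - X - Y` with `I(U;X) > 0`; in particular `ρ_m²(X;Y) ≤ s*(X;Y)`. -/
theorem maxCorr_sq_le_sStar {X Y : Type*} [Fintype X] [Fintype Y]
    (p : X → ℝ) (W : X → Y → ℝ)
    (hp : IsPMF p) (hpos : ∀ x, 0 < p x) (hW : ∀ x, IsPMF (W x))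
    (hy : ∀ y, 0 < ∑ x, p x * W x y) :
    (maxCorr (fun x y => p x * W x y))^2
        ≤ sSup {c : ℝ | ∃ n : ℕ, ∃ q : Fin n → X → ℝ,
            (∀ u x, 0 ≤ q u x) ∧ (∀ x, ∑ u, q u x = p x) ∧
            0 < mutInfo q ∧
            c = mutInfo (fun u y => ∑ x, q u x * W x y) / mutInfo q} ∧
    (maxCorr (fun x y => p x * W x y))^2 ≤ sStar p W := by
  classical
  obtain ⟨hpnn, hpsum⟩ := hp
  have hWnn : ∀ x y, 0 ≤ W x y := fun x y => (hW x).1 y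
  have hWsum : ∀ x, ∑ y, W x y = 1 := fun x => (hW x).2
  -- the two target sets
  set S1 : Set ℝ := {c : ℝ | ∃ n : ℕ, ∃ q : Fin n → X → ℝ,
      (∀ u x, 0 ≤ q u x) ∧ (∀ x, ∑ u, q u x = p x) ∧
      0 < mutInfo q ∧
      c = mutInfo (fun u y => ∑ x, q u x * W x y) / mutInfo q} with hS1
  have hbdd1 : BddAbove S1 := by
    refine ⟨1, fun c hc => ?_⟩
    obtain ⟨n, q, hqnn, hqmarg, hqpos, rfl⟩ := hc
    rw [div_le_one hqpos]
    exact aux_mutInfo_dpi q p W hqnn hqmarg hpos hWnn hWsum hy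
  have hnn1 : 0 ≤ sSup S1 := by
    apply Real.sSup_nonneg
    rintro c ⟨n, q, hqnn, hqmarg, hqpos, rfl⟩
    apply div_nonneg _ hqpos.le
    apply aux_mutInfo_nonneg _ (fun u y =>
      Finset.sum_nonneg (fun x _ => mul_nonneg (hqnn u x) (hWnn x y)))
    have e1 : ∀ u : Fin n, ∑ y, ∑ x, q u x * W x y = ∑ x, q u x :=
      fun u => sum_image_total (q u) W hWsum
    rw [Finset.sum_congr rfl (fun u _ => e1 u), Finset.sum_comm,
      Finset.sum_congr rfl (fun x (_ : x ∈ Finset.univ) => hqmarg x)]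
    exact hpsum
  set S2 : Set ℝ := {c : ℝ | ∃ r : X → ℝ, IsPMF r ∧ r ≠ p ∧
      c = KL (fun y => ∑ x, r x * W x y) (fun y => ∑ x, p x * W x y) / KL r p} with hS2
  have hstar : sStar p W = sSup S2 := rfl
  have hKLnn : ∀ r : X → ℝ, IsPMF r → 0 ≤ KL r p := by
    intro r hr
    exact aux_kl_nonneg r p hr.1 (fun x => (hpos x).le) (fun x _ => hpos x)
      (by rw [hr.2, hpsum])
  have hKLimnn : ∀ r : X → ℝ, IsPMF r →
      0 ≤ KL (fun y => ∑ x, r x * W x y) (fun y => ∑ x, p x * W x y) := by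
    intro r hr
    apply aux_kl_nonneg
    · exact fun y => Finset.sum_nonneg (fun x _ => mul_nonneg (hr.1 x) (hWnn x y))
    · exact fun y => (hy y).le
    · exact fun y _ => hy y
    · rw [sum_image_total r W hWsum, sum_image_total p W hWsum]
      rw [hr.2, hpsum]
  have hbdd2 : BddAbove S2 := by
    refine ⟨1, fun c hc => ?_⟩
    obtain ⟨r, hrP, hrne, rfl⟩ := hc
    rcases eq_or_lt_of_le (hKLnn r hrP) with h | h
    · rw [← h, div_zero]
      norm_num
    · rw [div_le_one h]
      exact aux_kl_dpi r p W hrP.1 (fun x => (hpos x).le) (fun x _ => hpos x)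
        hWnn hWsum hy
  have hnn2 : 0 ≤ sSup S2 := by
    apply Real.sSup_nonneg
    rintro c ⟨r, hrP, hrne, rfl⟩
    exact div_nonneg (hKLimnn r hrP) (hKLnn r hrP)
  -- the maximal-correlation set
  set C : Set ℝ := {c : ℝ | ∃ f : X → ℝ, ∃ g : Y → ℝ,
      (∑ x, ∑ y, p x * W x y * f x) = 0 ∧ (∑ x, ∑ y, p x * W x y * g y) = 0 ∧
      (∑ x, ∑ y, p x * W x y * (f x)^2) = 1 ∧ (∑ x, ∑ y, p x * W x y * (g y)^2) = 1 ∧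
      c = ∑ x, ∑ y, p x * W x y * f x * g y} with hC
  have hmc : maxCorr (fun x y => p x * W x y) = sSup C := rfl
  have hsym : ∀ c ∈ C, -c ∈ C := by
    rintro c ⟨f, g, h1, h2, h3, h4, rfl⟩
    have eneg : ∑ x, ∑ y, p x * W x y * (-f x) * g y
        = -∑ x, ∑ y, p x * W x y * f x * g y := by
      rw [← Finset.sum_neg_distrib]
      apply Finset.sum_congr rfl
      intro x _
      rw [← Finset.sum_neg_distrib]
      exact Finset.sum_congr rfl (fun y _ => by ring)
    have eneg0 : ∑ x, ∑ y, p x * W x y * (-f x)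
        = -∑ x, ∑ y, p x * W x y * f x := by
      rw [← Finset.sum_neg_distrib]
      apply Finset.sum_congr rfl
      intro x _
      rw [← Finset.sum_neg_distrib]
      exact Finset.sum_congr rfl (fun y _ => by ring)
    refine ⟨fun x => -f x, g, by rw [eneg0, h1, neg_zero], h2, ?_, h4, by rw [eneg]⟩
    rw [Finset.sum_congr rfl (fun x (_ : x ∈ Finset.univ) =>
      Finset.sum_congr rfl (fun y (_ : y ∈ Finset.univ) => show p x * W x y * (-f x)^2
        = p x * W x y * (f x)^2 by ring))]
    exact h3
  have hkey : ∀ c ∈ C, c^2 ≤ sSup S1 ∧ c^2 ≤ sSup S2 := by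
    rintro c ⟨f, g, hf0, hg0, hf2, hg2, hc⟩
    -- reduce to marginal statements
    have ef : ∀ (h : X → ℝ), ∑ x, ∑ y, p x * W x y * h x = ∑ x, p x * h x := by
      intro h
      apply Finset.sum_congr rfl
      intro x _
      rw [Finset.sum_congr rfl (fun y (_ : y ∈ Finset.univ) =>
        show p x * W x y * h x = (p x * h x) * W x y by ring), ← Finset.mul_sum,
        hWsum x, mul_one]
    have eg : ∀ (h : Y → ℝ), ∑ x, ∑ y, p x * W x y * h y = ∑ y, margY p W y * h y := by
      intro h
      rw [Finset.sum_comm]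
      apply Finset.sum_congr rfl
      intro y _
      rw [← Finset.sum_mul]
      rfl
    rw [ef f] at hf0
    rw [ef (fun x => (f x)^2)] at hf2
    rw [eg g] at hg0
    rw [eg (fun y => (g y)^2)] at hg2
    have hcy : c = ∑ y, (margY p W y * condExp p W f y) * g y := by
      rw [hc, Finset.sum_comm]
      apply Finset.sum_congr rfl
      intro y _
      rw [← Finset.sum_mul, condExp_mul p W f hy y]
    -- Cauchy-Schwarz : c² ≤ B0
    have hmnn : ∀ y, (0:ℝ) ≤ margY p W y := fun y => (hy y).le
    have hcB : c^2 ≤ ∑ y, margY p W y * (condExp p W f y)^2 := by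
      have hcs := Finset.sum_mul_sq_le_sq_mul_sq Finset.univ
        (fun y => Real.sqrt (margY p W y) * condExp p W f y)
        (fun y => Real.sqrt (margY p W y) * g y)
      have e1 : ∀ y, (Real.sqrt (margY p W y) * condExp p W f y)
          * (Real.sqrt (margY p W y) * g y)
          = (margY p W y * condExp p W f y) * g y := by
        intro y
        rw [show (Real.sqrt (margY p W y) * condExp p W f y)
            * (Real.sqrt (margY p W y) * g y)
          = (Real.sqrt (margY p W y) * Real.sqrt (margY p W y))
            * (condExp p W f y * g y) from by ring, Real.mul_self_sqrt (hmnn y)]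
        ring
      have e2 : ∀ y, (Real.sqrt (margY p W y) * condExp p W f y)^2
          = margY p W y * (condExp p W f y)^2 := by
        intro y
        rw [mul_pow, Real.sq_sqrt (hmnn y)]
      have e3 : ∀ y, (Real.sqrt (margY p W y) * g y)^2
          = margY p W y * (g y)^2 := by
        intro y
        rw [mul_pow, Real.sq_sqrt (hmnn y)]
      rw [Finset.sum_congr rfl (fun y _ => e1 y), Finset.sum_congr rfl (fun y _ => e2 y),
        Finset.sum_congr rfl (fun y _ => e3 y), hg2, mul_one] at hcs
      rw [hcy]
      exact hcs
    constructor
    · apply le_of_forall_pos_le_add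
      intro δ hδ
      obtain ⟨s, hsmem, hsge⟩ := aux_mem_S1 p W f hpsum hpos hWnn hWsum hy hf0 hf2 δ hδ
      have := le_csSup hbdd1 hsmem
      linarith
    · apply le_of_forall_pos_le_add
      intro δ hδ
      obtain ⟨s, hsmem, hsge⟩ := aux_mem_sStar p W f hpsum hpos hWnn hWsum hy hf0 hf2 δ hδ
      have := le_csSup hbdd2 hsmem
      linarith
  rw [hmc, hstar]
  exact ⟨aux_sq_sSup C hsym _ hnn1 (fun c hc => (hkey c hc).1),
    aux_sq_sSup C hsym _ hnn2 (fun c hc => (hkey c hc).2)⟩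
end
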